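/- arXiv:2209.06017 — 11 statements merged into one kernel-verified Lean document; each statement's English description precedes it below -/
import Mathlib

section
/- Let S, R, T be commutative topological monoids such that S is T-dual to R with duality function ψ : S × R → T. Then a map m : S → S has a dual map m̂ : R → R with respect to ψ if and only if m preserves 𝓗(S,T). Moreover, if a dual map exists it is unique, and it preserves 𝓗(R,T). -/
/-- `f` is a continuous monoid homomorphism between topological monoids. -/
def IsContMonoidHom {M N : Type*} [CommMonoid M] [CommMonoid N]
    [TopologicalSpace M] [TopologicalSpace N] (f : M → N) : Prop :=
  Continuous f ∧ (∀ a b, f (a * b) = f a * f b) ∧ f 1 = 1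

/-- **Maps having a dual.** Let `S`, `R`, `T` be commutative topological monoids such that `S`
is `T`-dual to `R` with duality function `ψ`. Then `m : S → S` has a dual map `m̂ : R → R`
with respect to `ψ` iff `m` preserves `𝓗(S,T)`; a dual map, if it exists, is unique, and it
preserves `𝓗(R,T)`. -/
theorem maps_having_a_dual
    {S R T : Type*} [CommMonoid S] [CommMonoid R] [CommMonoid T]
    [TopologicalSpace S] [TopologicalSpace R] [TopologicalSpace T]
    [ContinuousMul S] [ContinuousMul R] [ContinuousMul T]
    (ψ : S → R → T)
    (hψ1 : ∀ x₁ x₂ : S, (∀ y : R, ψ x₁ y = ψ x₂ y) → x₁ = x₂)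
    (hψ2 : ∀ f : S → T, IsContMonoidHom f ↔ ∃ y : R, f = fun x => ψ x y)
    (hψ3 : ∀ y₁ y₂ : R, (∀ x : S, ψ x y₁ = ψ x y₂) → y₁ = y₂)
    (hψ4 : ∀ g : R → T, IsContMonoidHom g ↔ ∃ x : S, g = fun y => ψ x y)
    (m : S → S) :
    ((∃ mhat : R → R, ∀ x y, ψ (m x) y = ψ x (mhat y)) ↔
      ∀ f : S → T, IsContMonoidHom f → IsContMonoidHom (f ∘ m)) ∧
    (∀ mhat mhat' : R → R, (∀ x y, ψ (m x) y = ψ x (mhat y)) →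
      (∀ x y, ψ (m x) y = ψ x (mhat' y)) → mhat = mhat') ∧
    (∀ mhat : R → R, (∀ x y, ψ (m x) y = ψ x (mhat y)) →
      ∀ g : R → T, IsContMonoidHom g → IsContMonoidHom (g ∘ mhat)) := by
  refine ⟨⟨?_, ?_⟩, ?_, ?_⟩
  · rintro ⟨mhat, hm⟩ f hf
    obtain ⟨y, rfl⟩ := (hψ2 f).mp hf
    exact (hψ2 _).mpr ⟨mhat y, funext fun x => hm x y⟩
  · intro h
    have key : ∀ y : R, ∃ y' : R, ∀ x, ψ (m x) y = ψ x y' := by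
      intro y
      have hf : IsContMonoidHom (fun x : S => ψ x y) := (hψ2 _).mpr ⟨y, rfl⟩
      obtain ⟨y', hy'⟩ := (hψ2 _).mp (h _ hf)
      exact ⟨y', fun x => congrFun hy' x⟩
    choose mhat hmhat using key
    exact ⟨mhat, fun x y => hmhat y x⟩
  · intro mhat mhat' h h'
    funext y
    exact hψ3 _ _ fun x => (h x y).symm.trans (h' x y)
  · intro mhat hm g hg
    obtain ⟨x, rfl⟩ := (hψ4 g).mp hg
    exact (hψ4 _).mpr ⟨m x, funext fun y => (hm x y).symm⟩
end

section
/- Let Λ be a countably infinite set and let S, R, T be finite commutative monoids such that S is T-dual to R with duality function ψ. Then S^Λ is T-dual to R^Λ_fin with duality function Ψ; explicitly: (i) if Ψ(x₁,y) = Ψ(x₂,y) for all y ∈ R^Λ_fin then x₁ = x₂; (ii) a function f : S^Λ → T is a continuous monoid homomorphism (S^Λ with the product topology, T discrete) if and only if f = Ψ(·,y) for some y ∈ R^Λ_fin; (iii) if Ψ(x,y₁) = Ψ(x,y₂) for all x ∈ S^Λ then y₁ = y₂; (iv) a function g : R^Λ_fin → T is a monoid homomorphism if and only if g = Ψ(x,·)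 for some x ∈ S^Λ. -/
/-! Bundling `ψ` as a bimultiplicative map `B : S →* R →* T`, the duality of `S` and `R` says
exactly that `B` and `B.flip` are bijective. Both sides of the product duality are governed by
finitely many coordinates: an element of `R^Λ_fin` is the finite product of its one-coordinate
pieces, and a continuous homomorphism `f : S^Λ → T` into a discrete monoid is trivial on a basic
neighbourhood of `1`, i.e. on all `x` that vanish on some finite `F`, whence
`f x = ∏ i ∈ F, f (mulSingle i (x i))`. Dualising each coordinate homomorphism with `B` produces
the required `y` (resp. `x`); separation is tested on one-coordinate elements. -/

open Function

/-- `f` is a monoid homomorphism (as a bare function). -/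
def IsMonoidHomFun {M N : Type*} [MulOneClass M] [MulOneClass N] (f : M → N) : Prop :=
  (∀ a b, f (a * b) = f a * f b) ∧ f 1 = 1

/-- The submonoid `R^Λ_fin` of `R^Λ` consisting of functions equal to the neutral element at
all but finitely many coordinates. -/
def finSuppSubmonoid (Λ R : Type*) [CommMonoid R] : Submonoid (Λ → R) where
  carrier := {y | (Function.mulSupport y).Finite}
  one_mem' := by
    simp only [Set.mem_setOf_eq]
    convert Set.finite_empty
    exact Function.mulSupport_one
  mul_mem' := by
    intro a b ha hb
    exact Set.Finite.subset (Set.Finite.union ha hb) (Function.mulSupport_mul a b)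

section MonoidHomFun

variable {M N : Type*} [MulOneClass M] [MulOneClass N]

theorem MonoidHom.isMonoidHomFun (f : M →* N) : IsMonoidHomFun f :=
  ⟨map_mul f, map_one f⟩

def IsMonoidHomFun.toMonoidHom {f : M → N} (hf : IsMonoidHomFun f) : M →* N where
  toFun := f
  map_one' := hf.2
  map_mul' := hf.1

end MonoidHomFun

def MonoidHom.ofIsMonoidHomFun₂ {S R T : Type*} [MulOneClass S] [MulOneClass R] [CommMonoid T]
    (ψ : S → R → T) (hL : ∀ r, IsMonoidHomFun (ψ · r)) (hR : ∀ s, IsMonoidHomFun (ψ s)) :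
    S →* R →* T where
  toFun s := (hR s).toMonoidHom
  map_one' := MonoidHom.ext fun r => (hL r).2
  map_mul' a b := MonoidHom.ext fun r => (hL r).1 a b

section MulSingle

variable {Λ M : Type*} [DecidableEq Λ] [CommMonoid M]

theorem finprod_apply_mulSingle {N : Type*} [CommMonoid N] (φ : Λ → M → N)
    (hφ : ∀ j, φ j 1 = 1) (i : Λ) (a : M) :
    ∏ᶠ j, φ j (Pi.mulSingle (M := fun _ => M) i a j) = φ i a := by
  rw [finprod_eq_single _ i fun j hj => by rw [Pi.mulSingle_eq_of_ne hj, hφ],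
    Pi.mulSingle_eq_same]

theorem Finset.prod_mulSingle_eq_piecewise (F : Finset Λ) (x : Λ → M) :
    ∏ i ∈ F, Pi.mulSingle i (x i) = F.piecewise x 1 := by
  ext j
  simp [Finset.prod_apply, Finset.piecewise]

theorem Finset.prod_mulSingle_of_mulSupport_subset {F : Finset Λ} {x : Λ → M}
    (hF : mulSupport x ⊆ F) : ∏ i ∈ F, Pi.mulSingle i (x i) = x := by
  rw [F.prod_mulSingle_eq_piecewise]
  ext j
  by_cases hj : j ∈ F
  · simp [hj]
  · simpa [hj] using (notMem_mulSupport.mp fun h => hj (hF h)).symm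

def finSuppSubmonoid.mulSingle (i : Λ) : M →* finSuppSubmonoid Λ M :=
  (MonoidHom.mulSingle (fun _ => M) i).codRestrict _ fun _ =>
    (Set.finite_singleton i).subset Pi.mulSupport_mulSingle_subset

@[simp]
theorem finSuppSubmonoid.coe_mulSingle (i : Λ) (a : M) :
    (mulSingle i a : Λ → M) = Pi.mulSingle i a :=
  rfl

theorem finSuppSubmonoid.eq_prod_mulSingle (y : finSuppSubmonoid Λ M) {F : Finset Λ}
    (hF : mulSupport y.1 ⊆ F) : y = ∏ i ∈ F, mulSingle i (y.1 i) := by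
  apply Subtype.ext
  rw [← Submonoid.coe_subtype, map_prod]
  exact (F.prod_mulSingle_of_mulSupport_subset hF).symm

end MulSingle

section ContinuousHom

variable {Λ S T : Type*} [CommMonoid S] [CommMonoid T] [TopologicalSpace S] [TopologicalSpace T]
  [DiscreteTopology T]

theorem MonoidHom.exists_finset_eq_one_of_continuous {f : (Λ → S) →* T} (hf : Continuous f) :
    ∃ F : Finset Λ, ∀ x, (∀ i ∈ F, x i = 1) → f x = 1 := by
  have hker : f ⁻¹' {1} ∈ nhds (1 : Λ → S) :=
    hf.continuousAt.preimage_mem_nhds ((isOpen_discrete _).mem_nhds (map_one f))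
  rw [nhds_pi, Filter.mem_pi'] at hker
  obtain ⟨F, t, ht, hsub⟩ := hker
  exact ⟨F, fun x hx => hsub fun i hi => hx i hi ▸ mem_of_mem_nhds (ht i)⟩

theorem MonoidHom.exists_finset_eq_prod_mulSingle_of_continuous [DecidableEq Λ]
    {f : (Λ → S) →* T} (hf : Continuous f) :
    ∃ F : Finset Λ, (∀ i ∉ F, ∀ s, f (Pi.mulSingle i s) = 1) ∧
      ∀ x, f x = ∏ i ∈ F, f (Pi.mulSingle i (x i)) := by
  obtain ⟨F, hF⟩ := f.exists_finset_eq_one_of_continuous hf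
  refine ⟨F, fun i hi s => hF _ fun j hj =>
    Pi.mulSingle_eq_of_ne (M := fun _ => S) (ne_of_mem_of_not_mem hj hi) s, fun x => ?_⟩
  have hsplit : x = F.piecewise x 1 * F.piecewise (1 : Λ → S) x := by
    ext j
    by_cases hj : j ∈ F <;> simp [hj]
  have hout : f (F.piecewise (1 : Λ → S) x) = 1 := hF _ fun j hj => by simp [hj]
  rw [← map_prod, F.prod_mulSingle_eq_piecewise]
  conv_lhs => rw [hsplit, map_mul, hout, mul_one]

end ContinuousHom

section Pairing

variable {Λ S R T : Type*} [CommMonoid S] [CommMonoid R] [CommMonoid T] (B : S →* R →* T)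

theorem mulSupport_pairing_subset_right (x : Λ → S) (y : Λ → R) :
    mulSupport (fun i => B (x i) (y i)) ⊆ mulSupport y :=
  mulSupport_subset_iff'.2 fun i hi => by rw [notMem_mulSupport.1 hi, map_one]

theorem eq_of_forall_finprod_pairing_eq_left (hB : Injective B) {x₁ x₂ : Λ → S}
    (h : ∀ y : finSuppSubmonoid Λ R, ∏ᶠ i, B (x₁ i) (y.1 i) = ∏ᶠ i, B (x₂ i) (y.1 i)) :
    x₁ = x₂ := by
  classical
  funext i
  refine hB (MonoidHom.ext fun r => ?_)
  have := h (finSuppSubmonoid.mulSingle i r)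
  rwa [finSuppSubmonoid.coe_mulSingle,
    finprod_apply_mulSingle (fun j => B (x₁ j)) (fun j => map_one _),
    finprod_apply_mulSingle (fun j => B (x₂ j)) (fun j => map_one _)] at this

theorem eq_of_forall_finprod_pairing_eq_right (hB : Injective B.flip)
    {y₁ y₂ : finSuppSubmonoid Λ R}
    (h : ∀ x : Λ → S, ∏ᶠ i, B (x i) (y₁.1 i) = ∏ᶠ i, B (x i) (y₂.1 i)) : y₁ = y₂ := by
  classical
  refine Subtype.ext (funext fun i => hB (MonoidHom.ext fun s => ?_))
  have := h (Pi.mulSingle i s)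
  rwa [finprod_apply_mulSingle (fun j a => B a (y₁.1 j)) (fun j => by simp),
    finprod_apply_mulSingle (fun j a => B a (y₂.1 j)) (fun j => by simp)] at this

theorem isMonoidHomFun_finprod_pairing_left {y : Λ → R} (hy : (mulSupport y).Finite) :
    IsMonoidHomFun fun x : Λ → S => ∏ᶠ i, B (x i) (y i) := by
  have hfin : ∀ x : Λ → S, (mulSupport fun i => B (x i) (y i)).Finite := fun x =>
    hy.subset (mulSupport_pairing_subset_right B x y)
  refine ⟨fun a b => ?_, by simp⟩
  simp only [Pi.mul_apply, map_mul, MonoidHom.mul_apply]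
  exact finprod_mul_distrib (hfin a) (hfin b)

theorem isMonoidHomFun_finprod_pairing_right (x : Λ → S) :
    IsMonoidHomFun fun y : finSuppSubmonoid Λ R => ∏ᶠ i, B (x i) (y.1 i) := by
  have hfin : ∀ y : finSuppSubmonoid Λ R, (mulSupport fun i => B (x i) (y.1 i)).Finite :=
    fun y => y.2.subset (mulSupport_pairing_subset_right B x y.1)
  refine ⟨fun a b => ?_, by simp⟩
  simp only [Submonoid.coe_mul, Pi.mul_apply, map_mul]
  exact finprod_mul_distrib (hfin a) (hfin b)

theorem continuous_finprod_pairing_left [TopologicalSpace S] [DiscreteTopology S]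
    [TopologicalSpace T] [DiscreteTopology T] {y : Λ → R} (hy : (mulSupport y).Finite) :
    Continuous fun x : Λ → S => ∏ᶠ i, B (x i) (y i) := by
  have hsub := fun x : Λ → S => (mulSupport_pairing_subset_right B x y).trans hy.coe_toFinset.ge
  simp only [finprod_eq_prod_of_mulSupport_subset _ (hsub _)]
  exact continuous_finsetProd _ fun i _ =>
    (continuous_of_discreteTopology (f := fun s : S => B s (y i))).comp (continuous_apply i)

theorem exists_coe_eq_finprod_pairing_of_continuous [TopologicalSpace S] [TopologicalSpace T]
    [DiscreteTopology T] (hinj : Injective B.flip) (hsurj : Surjective B.flip)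
    {f : (Λ → S) →* T} (hf : Continuous f) :
    ∃ y : finSuppSubmonoid Λ R, ⇑f = fun x => ∏ᶠ i, B (x i) (y.1 i) := by
  classical
  obtain ⟨F, hF1, hF⟩ := f.exists_finset_eq_prod_mulSingle_of_continuous hf
  choose y hy using fun i => hsurj (f.comp (MonoidHom.mulSingle (fun _ => S) i))
  have hyF : mulSupport y ⊆ F := fun i hi => by
    by_contra hiF
    exact hi (hinj (by rw [hy, map_one]; exact MonoidHom.ext (hF1 i hiF)))
  refine ⟨⟨y, F.finite_toSet.subset hyF⟩, funext fun x => ?_⟩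
  rw [hF, finprod_eq_prod_of_mulSupport_subset _
    ((mulSupport_pairing_subset_right B x y).trans hyF)]
  exact Finset.prod_congr rfl fun i _ => (DFunLike.congr_fun (hy i) (x i)).symm

theorem exists_coe_eq_finprod_pairing_of_finSupp (hsurj : Surjective B)
    (g : finSuppSubmonoid Λ R →* T) :
    ∃ x : Λ → S, ⇑g = fun y => ∏ᶠ i, B (x i) (y.1 i) := by
  classical
  choose x hx using fun i => hsurj (g.comp (finSuppSubmonoid.mulSingle i))
  refine ⟨x, funext fun y => ?_⟩
  have hyF : mulSupport y.1 ⊆ y.2.toFinset := y.2.coe_toFinset.ge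
  rw [finprod_eq_prod_of_mulSupport_subset _
    ((mulSupport_pairing_subset_right B x y.1).trans hyF)]
  conv_lhs => rw [finSuppSubmonoid.eq_prod_mulSingle y hyF, map_prod]
  exact Finset.prod_congr rfl fun i _ => (DFunLike.congr_fun (hx i) (y.1 i)).symm

theorem continuous_and_isMonoidHomFun_iff_exists_finprod_pairing [TopologicalSpace S]
    [DiscreteTopology S] [TopologicalSpace T] [DiscreteTopology T] (hinj : Injective B.flip)
    (hsurj : Surjective B.flip) (f : (Λ → S) → T) :
    (Continuous f ∧ IsMonoidHomFun f) ↔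
      ∃ y : finSuppSubmonoid Λ R, f = fun x => ∏ᶠ i, B (x i) (y.1 i) := by
  refine ⟨fun ⟨hc, hf⟩ => exists_coe_eq_finprod_pairing_of_continuous B hinj hsurj
    (f := hf.toMonoidHom) hc, ?_⟩
  rintro ⟨y, rfl⟩
  exact ⟨continuous_finprod_pairing_left B y.2, isMonoidHomFun_finprod_pairing_left B y.2⟩

theorem isMonoidHomFun_iff_exists_finprod_pairing (hsurj : Surjective B)
    (g : finSuppSubmonoid Λ R → T) :
    IsMonoidHomFun g ↔ ∃ x : Λ → S, g = fun y => ∏ᶠ i, B (x i) (y.1 i) :=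
  ⟨fun hg => exists_coe_eq_finprod_pairing_of_finSupp B hsurj hg.toMonoidHom,
    fun ⟨x, hx⟩ => hx ▸ isMonoidHomFun_finprod_pairing_right B x⟩

end Pairing

theorem duality_on_product_spaces_general
    {Λ S R T : Type*}
    [CommMonoid S] [CommMonoid R] [CommMonoid T]
    [TopologicalSpace S] [DiscreteTopology S]
    [TopologicalSpace T] [DiscreteTopology T]
    (ψ : S → R → T)
    (hψ1 : ∀ x₁ x₂ : S, (∀ y : R, ψ x₁ y = ψ x₂ y) → x₁ = x₂)
    (hψ2 : ∀ f : S → T, IsMonoidHomFun f ↔ ∃ y : R, f = fun x => ψ x y)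
    (hψ3 : ∀ y₁ y₂ : R, (∀ x : S, ψ x y₁ = ψ x y₂) → y₁ = y₂)
    (hψ4 : ∀ g : R → T, IsMonoidHomFun g ↔ ∃ x : S, g = fun y => ψ x y) :
    (∀ x₁ x₂ : Λ → S,
      (∀ y : finSuppSubmonoid Λ R,
        (∏ᶠ i, ψ (x₁ i) (y.1 i)) = ∏ᶠ i, ψ (x₂ i) (y.1 i)) → x₁ = x₂) ∧
    (∀ f : (Λ → S) → T, (Continuous f ∧ IsMonoidHomFun f) ↔
      ∃ y : finSuppSubmonoid Λ R, f = fun x => ∏ᶠ i, ψ (x i) (y.1 i)) ∧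
    (∀ y₁ y₂ : finSuppSubmonoid Λ R,
      (∀ x : Λ → S, (∏ᶠ i, ψ (x i) (y₁.1 i)) = ∏ᶠ i, ψ (x i) (y₂.1 i)) → y₁ = y₂) ∧
    (∀ g : finSuppSubmonoid Λ R → T, IsMonoidHomFun g ↔
      ∃ x : Λ → S, g = fun y => ∏ᶠ i, ψ (x i) (y.1 i)) := by
  let B := MonoidHom.ofIsMonoidHomFun₂ ψ (fun r => (hψ2 _).2 ⟨r, rfl⟩)
    (fun s => (hψ4 _).2 ⟨s, rfl⟩)
  have hinj : Injective B := fun s₁ s₂ h => hψ1 s₁ s₂ (DFunLike.congr_fun h)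
  have hinj' : Injective B.flip := fun r₁ r₂ h => hψ3 r₁ r₂ (DFunLike.congr_fun h)
  have hsurj : Surjective B := fun φ =>
    ((hψ4 φ).1 φ.isMonoidHomFun).imp fun s hs => MonoidHom.ext fun r => (congrFun hs r).symm
  have hsurj' : Surjective B.flip := fun φ =>
    ((hψ2 φ).1 φ.isMonoidHomFun).imp fun r hr => MonoidHom.ext fun s => (congrFun hr s).symm
  exact ⟨fun _ _ => eq_of_forall_finprod_pairing_eq_left B hinj,
    continuous_and_isMonoidHomFun_iff_exists_finprod_pairing B hinj' hsurj',
    fun _ _ => eq_of_forall_finprod_pairing_eq_right B hinj',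
    isMonoidHomFun_iff_exists_finprod_pairing B hsurj⟩

/-- **Duality on product spaces.** If the finite commutative monoid `S` is `T`-dual to `R`
with duality function `ψ`, then `S^Λ` is `T`-dual to `R^Λ_fin` with the duality function
`Ψ(x,y) = ∏ᶠ i, ψ (x i) (y i)`. -/
theorem duality_on_product_spaces
    {Λ S R T : Type*} [Countable Λ] [Infinite Λ]
    [CommMonoid S] [CommMonoid R] [CommMonoid T]
    [Finite S] [Finite R] [Finite T]
    [TopologicalSpace S] [DiscreteTopology S]
    [TopologicalSpace T] [DiscreteTopology T]
    (ψ : S → R → T)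
    (hψ1 : ∀ x₁ x₂ : S, (∀ y : R, ψ x₁ y = ψ x₂ y) → x₁ = x₂)
    (hψ2 : ∀ f : S → T, IsMonoidHomFun f ↔ ∃ y : R, f = fun x => ψ x y)
    (hψ3 : ∀ y₁ y₂ : R, (∀ x : S, ψ x y₁ = ψ x y₂) → y₁ = y₂)
    (hψ4 : ∀ g : R → T, IsMonoidHomFun g ↔ ∃ x : S, g = fun y => ψ x y) :
    (∀ x₁ x₂ : Λ → S,
      (∀ y : finSuppSubmonoid Λ R,
        (∏ᶠ i, ψ (x₁ i) (y.1 i)) = ∏ᶠ i, ψ (x₂ i) (y.1 i)) → x₁ = x₂) ∧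
    (∀ f : (Λ → S) → T, (Continuous f ∧ IsMonoidHomFun f) ↔
      ∃ y : finSuppSubmonoid Λ R, f = fun x => ∏ᶠ i, ψ (x i) (y.1 i)) ∧
    (∀ y₁ y₂ : finSuppSubmonoid Λ R,
      (∀ x : Λ → S, (∏ᶠ i, ψ (x i) (y₁.1 i)) = ∏ᶠ i, ψ (x i) (y₂.1 i)) → y₁ = y₂) ∧
    (∀ g : finSuppSubmonoid Λ R → T, IsMonoidHomFun g ↔
      ∃ x : Λ → S, g = fun y => ∏ᶠ i, ψ (x i) (y.1 i)) :=
  duality_on_product_spaces_general ψ hψ1 hψ2 hψ3 hψ4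
end

section
/- Let Λ be a countably infinite set and let S be a finite commutative monoid. Every local monoid homomorphism m ∈ 𝓗_loc(S^Λ,S^Λ) admits a matrix representation: there exists a family M = (M_{ij})_{i,j∈Λ} of monoid homomorphisms from S to S such that the set Δ := {(i,j) ∈ Λ×Λ : i ≠ j and M_{ij} ≠ o} ∪ {(i,i) : M_{ii} ≠ id} is finite and m(x)(j) = ⊙_{i∈Λ} M_{ij}(x(i)) for all x ∈ S^Λ and j ∈ Λ. -/
open Function

/-- A continuous function from a product of copies of a finite discrete space to a
discrete space depends only on finitely many coordinates. -/
theorem exists_finset_deps {Λ S : Type*} [Finite S] [TopologicalSpace S] [DiscreteTopology S]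
    (g : (Λ → S) → S) (hg : Continuous g) :
    ∃ F : Finset Λ, ∀ x y : Λ → S, (∀ i ∈ F, x i = y i) → g x = g y := by
  classical
  have hopen : ∀ x : Λ → S, ∃ I : Finset Λ,
      ∀ y : Λ → S, (∀ i ∈ I, y i = x i) → g y = g x := by
    intro x
    have hs : IsOpen (g ⁻¹' {g x}) := (isOpen_discrete _).preimage hg
    rw [isOpen_pi_iff] at hs
    obtain ⟨I, u, hu, hsub⟩ := hs x rfl
    refine ⟨I, fun y hy => ?_⟩
    have hmem : y ∈ (I : Set Λ).pi u := fun i hi => by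
      rw [hy i hi]; exact (hu i hi).2
    exact hsub hmem
  choose I hI using hopen
  have hVopen : ∀ x : Λ → S, IsOpen {y : Λ → S | ∀ i ∈ I x, y i = x i} := by
    intro x
    have heq : {y : Λ → S | ∀ i ∈ I x, y i = x i} = (↑(I x) : Set Λ).pi fun i => {x i} := by
      ext y; simp [Set.mem_pi]
    rw [heq]
    exact isOpen_set_pi (I x).finite_toSet fun i _ => isOpen_discrete _
  have hcov : (Set.univ : Set (Λ → S)) ⊆ ⋃ x : Λ → S, {y | ∀ i ∈ I x, y i = x i} :=
    fun y _ => Set.mem_iUnion.2 ⟨y, fun i _ => rfl⟩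
  obtain ⟨t, ht⟩ := isCompact_univ.elim_finite_subcover _ hVopen hcov
  refine ⟨t.biUnion I, fun x y hxy => ?_⟩
  obtain ⟨z, hz, hxz⟩ := Set.mem_iUnion₂.1 (ht (Set.mem_univ x))
  have hyz : ∀ i ∈ I z, y i = z i := fun i hi =>
    (hxy i (Finset.mem_biUnion.2 ⟨z, hz, hi⟩)).symm.trans (hxz i hi)
  rw [hI z x hxz, hI z y hyz]

/-- **Matrix representation of local monoid homomorphisms.** Every local monoid homomorphism
`m` of `S^Λ` (continuous for the product topology with `S` discrete, with
`D(m) = {i | ∃ x, m x i ≠ x i}` finite) admits a representation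
`m(x)(j) = ∏ᶠ i, M i j (x i)` by a matrix `M = (M_{ij})` of monoid homomorphisms of `S`
whose set `Δ` of exceptional entries (off-diagonal entries different from the
constant-neutral homomorphism, diagonal entries different from the identity) is finite. -/
theorem local_monoid_hom_has_matrix_representation
    {Λ S : Type*} [Countable Λ] [Infinite Λ]
    [CommMonoid S] [Finite S] [TopologicalSpace S] [DiscreteTopology S]
    (m : (Λ → S) → (Λ → S))
    (hcont : Continuous m)
    (hhom : IsMonoidHomFun m)
    (hloc : {i : Λ | ∃ x : Λ → S, m x i ≠ x i}.Finite) :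
    ∃ M : Λ → Λ → (S →* S),
      ({p : Λ × Λ | p.1 ≠ p.2 ∧ M p.1 p.2 ≠ 1} ∪
       {p : Λ × Λ | p.1 = p.2 ∧ M p.1 p.2 ≠ MonoidHom.id S} : Set (Λ × Λ)).Finite ∧
      ∀ (x : Λ → S) (j : Λ), m x j = ∏ᶠ i, M i j (x i) := by
  classical
  let mh : (Λ → S) →* (Λ → S) := { toFun := m, map_one' := hhom.2, map_mul' := hhom.1 }
  have hgc : ∀ j, Continuous fun x : Λ → S => m x j := fun j => (continuous_apply j).comp hcont
  choose F hF using fun j => exists_finset_deps _ (hgc j)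
  set M : Λ → Λ → (S →* S) := fun i j =>
    (Pi.evalMonoidHom (fun _ : Λ => S) j).comp
      (mh.comp (MonoidHom.mulSingle (fun _ : Λ => S) i)) with hMdef
  have hM : ∀ i j s, M i j s = m (Pi.mulSingle i s) j := fun i j s => rfl
  have hm1 : ∀ j, m 1 j = 1 := fun j => by rw [hhom.2]; rfl
  have hMzero : ∀ i j, i ∉ F j → M i j = 1 := by
    intro i j hi
    ext s
    have h1 : m (Pi.mulSingle i s) j = m 1 j := by
      refine hF j _ _ (fun k hk => ?_)
      have hki : k ≠ i := fun h => hi (h ▸ hk)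
      simp [Pi.mulSingle_apply, hki]
    rw [hM, h1, hm1]; rfl
  have hnotD : ∀ j, j ∉ {i : Λ | ∃ x : Λ → S, m x i ≠ x i} → ∀ x, m x j = x j := by
    intro j hj x
    by_contra h
    exact hj ⟨x, h⟩
  refine ⟨M, ?_, ?_⟩
  · have hsub : ({p : Λ × Λ | p.1 ≠ p.2 ∧ M p.1 p.2 ≠ 1} ∪
        {p : Λ × Λ | p.1 = p.2 ∧ M p.1 p.2 ≠ MonoidHom.id S} : Set (Λ × Λ)) ⊆
        ⋃ j ∈ {i : Λ | ∃ x : Λ → S, m x i ≠ x i},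
          (((↑(F j) : Set Λ) ∪ {j}) ×ˢ ({j} : Set Λ)) := by
      rintro ⟨i, j⟩ (⟨hij, hM1⟩ | ⟨hij, hMid⟩)
      · have hjD : j ∈ {i : Λ | ∃ x : Λ → S, m x i ≠ x i} := by
          by_contra hj
          apply hM1
          ext s
          rw [hM, hnotD j hj]
          have hji : j ≠ i := Ne.symm hij
          simp [Pi.mulSingle_apply, hji]
        have hiF : i ∈ F j := by
          by_contra hi
          exact hM1 (hMzero i j hi)
        exact Set.mem_iUnion₂.2 ⟨j, hjD, Or.inl hiF, rfl⟩
      · cases hij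
        have hiD : i ∈ {i : Λ | ∃ x : Λ → S, m x i ≠ x i} := by
          by_contra hi
          apply hMid
          ext s
          rw [hM, hnotD i hi]
          simp
        exact Set.mem_iUnion₂.2 ⟨i, hiD, Or.inr rfl, rfl⟩
    exact (hloc.biUnion (fun j _ =>
      (((F j).finite_toSet.union (Set.finite_singleton j)).prod
        (Set.finite_singleton j)))).subset hsub
  · intro x j
    have hsupp : (Function.mulSupport fun i => M i j (x i)) ⊆ ↑(F j) := by
      intro i hi
      by_contra h
      exact hi (show M i j (x i) = 1 by rw [hMzero i j h]; rfl)
    rw [finprod_eq_prod_of_mulSupport_subset _ hsupp]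
    have hy : ∀ k ∈ F j, x k = (∏ i ∈ F j, Pi.mulSingle i (x i)) k := by
      intro k hk
      rw [Finset.prod_apply]
      rw [Finset.prod_eq_single k (fun b _ hbk => by
        simp [Pi.mulSingle_apply, Ne.symm hbk]) (fun h => absurd hk h)]
      simp
    calc m x j = m (∏ i ∈ F j, Pi.mulSingle i (x i)) j := hF j _ _ hy
      _ = (∏ i ∈ F j, m (Pi.mulSingle i (x i))) j := by
          rw [show m (∏ i ∈ F j, Pi.mulSingle i (x i))
              = ∏ i ∈ F j, m (Pi.mulSingle i (x i)) from map_prod mh _ _]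
      _ = ∏ i ∈ F j, m (Pi.mulSingle i (x i)) j := by rw [Finset.prod_apply]
      _ = ∏ i ∈ F j, M i j (x i) := rfl
end

section
/- Let Λ be a countably infinite set and let S, R, T be finite commutative monoids such that S is T-dual to R with duality function ψ. Let m ∈ 𝓗_loc(S^Λ,S^Λ) and let M = (M_{ij})_{i,j∈Λ} be a family of monoid homomorphisms from S to S with Δ := {(i,j) : i ≠ j, M_{ij} ≠ o} ∪ {(i,i) : M_{ii} ≠ id} finite and m(x)(j) = ⊙_{i∈Λ} M_{ij}(x(i)) for all x, j. Then for each i,j ∈ Λ there is a unique map M̂_{ij} : R → R satisfying ψ(M_{ij}(s),r) = ψ(s,M̂_{ij}(r)) for all s ∈ S and r ∈ R, and it is a monoid homomorphism. Moreover the map m̂ : R^Λ → R^Λ defined by m̂(y)(i) := ⊡_{j∈Λ} M̂_{ij}(y(j)) is a local monoid homomorphism, it maps R^Λ_fin into itself, and its restriction to R^Λ_fin is the unique map R^Λ_fin → R^Λ_fin satisfying Ψ(m(x),y) = Ψ(x,m̂(y)) for all x ∈ S^Λ and y ∈ R^Λ_fin. -/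
open Function

/-- The elements of `R^Λ` that equal the neutral element at all but finitely many
coordinates (`R^Λ_fin`). -/
abbrev FinSuppFun (Λ R : Type*) [One R] := {y : Λ → R // (Function.mulSupport y).Finite}

/-- **Dual local homomorphisms.** Let `S` be `T`-dual to `R` with duality function `ψ`
(`S`, `R`, `T` finite commutative monoids) and let `m ∈ 𝓗_loc(S^Λ,S^Λ)` have matrix
representation `m(x)(j) = ∏ᶠ i, M i j (x i)` with finitely many exceptional entries.
Then each `M_{ij}` has a unique dual map `M̂_{ij} : R → R` w.r.t. `ψ`, which is a monoid
homomorphism; and the map `m̂(y)(i) := ∏ᶠ j, M̂ i j (y j)` is a well-defined local monoid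
homomorphism of `R^Λ`, maps `R^Λ_fin` into itself, its restriction to `R^Λ_fin` is dual to
`m` w.r.t. `Ψ(x,y) = ∏ᶠ i, ψ (x i) (y i)`, and it is the unique such map on `R^Λ_fin`. -/
theorem dual_local_homomorphisms
    {Λ S R T : Type*} [Countable Λ] [Infinite Λ]
    [CommMonoid S] [CommMonoid R] [CommMonoid T]
    [Finite S] [Finite R] [Finite T]
    [TopologicalSpace S] [DiscreteTopology S]
    [TopologicalSpace R] [DiscreteTopology R]
    (ψ : S → R → T)
    (hψ1 : ∀ x₁ x₂ : S, (∀ y : R, ψ x₁ y = ψ x₂ y) → x₁ = x₂)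
    (hψ2 : ∀ f : S → T, IsMonoidHomFun f ↔ ∃ y : R, f = fun x => ψ x y)
    (hψ3 : ∀ y₁ y₂ : R, (∀ x : S, ψ x y₁ = ψ x y₂) → y₁ = y₂)
    (hψ4 : ∀ g : R → T, IsMonoidHomFun g ↔ ∃ x : S, g = fun y => ψ x y)
    (m : (Λ → S) → (Λ → S))
    (hmcont : Continuous m)
    (hmhom : IsMonoidHomFun m)
    (hmloc : {i : Λ | ∃ x : Λ → S, m x i ≠ x i}.Finite)
    (M : Λ → Λ → (S →* S))
    (hΔ : ({p : Λ × Λ | p.1 ≠ p.2 ∧ M p.1 p.2 ≠ 1} ∪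
           {p : Λ × Λ | p.1 = p.2 ∧ M p.1 p.2 ≠ MonoidHom.id S} : Set (Λ × Λ)).Finite)
    (hm : ∀ (x : Λ → S) (j : Λ), m x j = ∏ᶠ i, M i j (x i)) :
    (∀ i j : Λ, ∃! h : R → R, ∀ (s : S) (r : R), ψ (M i j s) r = ψ s (h r)) ∧
    (∀ (i j : Λ) (h : R → R),
      (∀ (s : S) (r : R), ψ (M i j s) r = ψ s (h r)) → IsMonoidHomFun h) ∧
    (∀ Mhat : Λ → Λ → (R → R),
      (∀ (i j : Λ) (s : S) (r : R), ψ (M i j s) r = ψ s (Mhat i j r)) →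
      (∀ (y : Λ → R) (i : Λ), (Function.mulSupport fun j => Mhat i j (y j)).Finite) ∧
      Continuous (fun (y : Λ → R) (i : Λ) => ∏ᶠ j, Mhat i j (y j)) ∧
      IsMonoidHomFun (fun (y : Λ → R) (i : Λ) => ∏ᶠ j, Mhat i j (y j)) ∧
      {i : Λ | ∃ y : Λ → R, (∏ᶠ j, Mhat i j (y j)) ≠ y i}.Finite ∧
      (∀ y : Λ → R, (Function.mulSupport y).Finite →
        (Function.mulSupport fun i => ∏ᶠ j, Mhat i j (y j)).Finite) ∧
      (∀ (x : Λ → S) (y : Λ → R), (Function.mulSupport y).Finite →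
        (∏ᶠ i, ψ (m x i) (y i)) = ∏ᶠ i, ψ (x i) (∏ᶠ j, Mhat i j (y j))) ∧
      (∀ g : FinSuppFun Λ R → FinSuppFun Λ R,
        (∀ (x : Λ → S) (y : FinSuppFun Λ R),
          (∏ᶠ i, ψ (m x i) (y.1 i)) = ∏ᶠ i, ψ (x i) ((g y).1 i)) →
        ∀ y : FinSuppFun Λ R, (g y).1 = fun i => ∏ᶠ j, Mhat i j (y.1 j))) := by
  classical
  -- basic properties of ψ
  have hψL : ∀ r : R, IsMonoidHomFun (fun s : S => ψ s r) := fun r => (hψ2 _).2 ⟨r, rfl⟩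
  have hψR : ∀ s : S, IsMonoidHomFun (fun r : R => ψ s r) := fun s => (hψ4 _).2 ⟨s, rfl⟩
  have ψ1L : ∀ r : R, ψ 1 r = 1 := fun r => (hψL r).2
  have ψmL : ∀ (s₁ s₂ : S) (r : R), ψ (s₁ * s₂) r = ψ s₁ r * ψ s₂ r :=
    fun s₁ s₂ r => (hψL r).1 s₁ s₂
  have ψ1R : ∀ s : S, ψ s 1 = 1 := fun s => (hψR s).2
  have ψmR : ∀ (s : S) (r₁ r₂ : R), ψ s (r₁ * r₂) = ψ s r₁ * ψ s r₂ :=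
    fun s r₁ r₂ => (hψR s).1 r₁ r₂
  -- ψ as monoid homs
  let φL : R → (S →* T) := fun r =>
    { toFun := fun s => ψ s r, map_one' := (hψL r).2, map_mul' := (hψL r).1 }
  let φR : S → (R →* T) := fun s =>
    { toFun := fun r => ψ s r, map_one' := (hψR s).2, map_mul' := (hψR s).1 }
  -- existence of duals
  have exdual : ∀ f : S →* S, ∃ h : R → R, ∀ (s : S) (r : R), ψ (f s) r = ψ s (h r) := by
    intro f
    have hex : ∀ r : R, ∃ y : R, (fun s => ψ (f s) r) = fun s => ψ s y := by
      intro r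
      apply (hψ2 _).1
      constructor
      · intro a b
        show ψ (f (a * b)) r = ψ (f a) r * ψ (f b) r
        rw [f.map_mul, ψmL]
      · show ψ (f 1) r = 1
        rw [f.map_one, ψ1L]
    choose h hh using hex
    exact ⟨h, fun s r => congrFun (hh r) s⟩
  -- part 2 : any dual is a monoid homomorphism
  have hdualhom : ∀ (i j : Λ) (h : R → R),
      (∀ (s : S) (r : R), ψ (M i j s) r = ψ s (h r)) → IsMonoidHomFun h := by
    intro i j h hh
    constructor
    · intro a b
      refine hψ3 _ _ fun s => ?_
      rw [← hh s (a * b), ψmR, hh s a, hh s b, ← ψmR, ψmR]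
    · refine hψ3 _ _ fun s => ?_
      rw [← hh s 1, ψ1R, ψ1R]
  refine ⟨?_, hdualhom, ?_⟩
  · -- part 1 : existence and uniqueness
    intro i j
    obtain ⟨h, hh⟩ := exdual (M i j)
    refine ⟨h, hh, fun h' hh' => funext fun r => hψ3 _ _ fun s => ?_⟩
    rw [← hh' s r, hh s r]
  -- part 3
  intro Mhat hMhat
  have hhom : ∀ i j : Λ, IsMonoidHomFun (Mhat i j) := fun i j => hdualhom i j _ (hMhat i j)
  set Δs : Set (Λ × Λ) := ({p : Λ × Λ | p.1 ≠ p.2 ∧ M p.1 p.2 ≠ 1} ∪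
      {p : Λ × Λ | p.1 = p.2 ∧ M p.1 p.2 ≠ MonoidHom.id S} : Set (Λ × Λ)) with hΔsdef
  have hmem : ∀ p : Λ × Λ, p ∈ Δs ↔
      (p.1 ≠ p.2 ∧ M p.1 p.2 ≠ 1) ∨ (p.1 = p.2 ∧ M p.1 p.2 ≠ MonoidHom.id S) := by
    intro p; rw [hΔsdef]; simp only [Set.mem_union, Set.mem_setOf_eq]
  have hM1 : ∀ i j : Λ, (i, j) ∉ Δs → i ≠ j → M i j = 1 := by
    intro i j hn hij
    by_contra h
    exact hn ((hmem (i, j)).2 (Or.inl ⟨hij, h⟩))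
  have hMid : ∀ i : Λ, (i, i) ∉ Δs → M i i = MonoidHom.id S := by
    intro i hn
    by_contra h
    exact hn ((hmem (i, i)).2 (Or.inr ⟨rfl, h⟩))
  have hMh1 : ∀ i j : Λ, (i, j) ∉ Δs → i ≠ j → ∀ r : R, Mhat i j r = 1 := by
    intro i j hn hij r
    refine hψ3 _ _ fun s => ?_
    rw [← hMhat i j s r, hM1 i j hn hij, MonoidHom.one_apply, ψ1L, ψ1R]
  have hMhid : ∀ i : Λ, (i, i) ∉ Δs → ∀ r : R, Mhat i i r = r := by
    intro i hn r
    refine hψ3 _ _ fun s => ?_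
    rw [← hMhat i i s r, hMid i hn, MonoidHom.id_apply]
  -- finite projections of Δs
  have hΔ1 : (Prod.fst '' Δs).Finite := hΔ.image _
  have hΔ2 : (Prod.snd '' Δs).Finite := hΔ.image _
  have hΔ1A : ∀ i j : Λ, (i, j) ∈ Δs → i ∈ Prod.fst '' Δs := fun i j h => ⟨(i, j), h, rfl⟩
  have hΔ2A : ∀ i j : Λ, (i, j) ∈ Δs → j ∈ Prod.snd '' Δs := fun i j h => ⟨(i, j), h, rfl⟩
  -- support control for rows of Mhat
  have key_supp : ∀ (y : Λ → R) (i : Λ),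
      (Function.mulSupport fun j => Mhat i j (y j)) ⊆ insert i (Prod.snd '' Δs) := by
    intro y i j hj
    simp only [Function.mem_mulSupport] at hj
    by_contra hji
    simp only [Set.mem_insert_iff, not_or] at hji
    obtain ⟨hji1, hji2⟩ := hji
    exact hj (hMh1 i j (fun h => hji2 (hΔ2A i j h)) (fun h => hji1 h.symm) (y j))
  have fin_supp : ∀ (y : Λ → R) (i : Λ),
      (Function.mulSupport fun j => Mhat i j (y j)).Finite :=
    fun y i => ((hΔ2.insert i).subset (key_supp y i))
  -- rows with no exceptional entries act as identity
  have hval : ∀ (y : Λ → R) (i : Λ), (∀ j : Λ, (i, j) ∉ Δs) →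
      (∏ᶠ j, Mhat i j (y j)) = y i := by
    intro y i hi
    have h1 : ∀ j : Λ, j ≠ i → Mhat i j (y j) = 1 :=
      fun j hj => hMh1 i j (hi j) (fun h => hj h.symm) (y j)
    calc (∏ᶠ j, Mhat i j (y j)) = Mhat i i (y i) := finprod_eq_single _ i h1
      _ = y i := hMhid i (hi i) (y i)
  have hdual : ∀ (x : Λ → S) (y : Λ → R), (Function.mulSupport y).Finite →
      (∏ᶠ i, ψ (m x i) (y i)) = ∏ᶠ i, ψ (x i) (∏ᶠ j, Mhat i j (y j)) := by
    intro x y hy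
    have hA : (Prod.fst '' Δs ∪ Prod.snd '' Δs ∪ Function.mulSupport y).Finite :=
      (hΔ1.union hΔ2).union hy
    set Af : Finset Λ := hA.toFinset with hAfdef
    have hmemAf : ∀ i : Λ, i ∈ Af ↔
        i ∈ Prod.fst '' Δs ∪ Prod.snd '' Δs ∪ Function.mulSupport y :=
      fun i => hA.mem_toFinset
    have hAf1 : ∀ i j : Λ, (i, j) ∈ Δs → i ∈ Af :=
      fun i j h => (hmemAf i).2 (Or.inl (Or.inl (hΔ1A i j h)))
    have hAf2 : ∀ i j : Λ, (i, j) ∈ Δs → j ∈ Af :=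
      fun i j h => (hmemAf j).2 (Or.inl (Or.inr (hΔ2A i j h)))
    have hAfy : ∀ i : Λ, i ∉ Af → y i = 1 := by
      intro i hi
      by_contra h
      exact hi ((hmemAf i).2 (Or.inr h))
    -- LHS as a finite product
    have hL : (∏ᶠ i, ψ (m x i) (y i)) = ∏ i ∈ Af, ψ (m x i) (y i) := by
      refine finprod_eq_prod_of_mulSupport_subset _ ?_
      intro i hi
      simp only [Function.mem_mulSupport] at hi
      by_contra hiA
      exact hi (by rw [hAfy i hiA, ψ1R])
    -- m x i as a finite product for i ∈ Af
    have hmx : ∀ i ∈ Af, m x i = ∏ k ∈ Af, M k i (x k) := by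
      intro i hiA
      rw [hm]
      refine finprod_eq_prod_of_mulSupport_subset _ ?_
      intro k hk
      simp only [Function.mem_mulSupport] at hk
      by_contra hkA
      apply hk
      have hki : k ≠ i := fun h => hkA (h ▸ hiA)
      rw [hM1 k i (fun h => hkA (hAf1 k i h)) hki]
      exact MonoidHom.one_apply _
    have hstep : ∀ i ∈ Af, ψ (m x i) (y i) = ∏ k ∈ Af, ψ (x k) (Mhat k i (y i)) := by
      intro i hiA
      rw [hmx i hiA]
      calc ψ (∏ k ∈ Af, M k i (x k)) (y i)
          = φL (y i) (∏ k ∈ Af, M k i (x k)) := rfl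
        _ = ∏ k ∈ Af, φL (y i) (M k i (x k)) := map_prod _ _ _
        _ = ∏ k ∈ Af, ψ (x k) (Mhat k i (y i)) :=
            Finset.prod_congr rfl fun k _ => hMhat k i (x k) (y i)
    have hstep2 : ∀ k ∈ Af, (∏ i ∈ Af, Mhat k i (y i)) = ∏ᶠ j, Mhat k j (y j) := by
      intro k hkA
      symm
      refine finprod_eq_prod_of_mulSupport_subset _ ?_
      intro i hi
      simp only [Function.mem_mulSupport] at hi
      by_contra hiA
      apply hi
      have hik : i ≠ k := fun h => hiA (h ▸ hkA)
      exact hMh1 k i (fun h => hiA (hAf2 k i h)) hik.symm (y i)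
    have hR : (∏ᶠ i, ψ (x i) (∏ᶠ j, Mhat i j (y j)))
        = ∏ i ∈ Af, ψ (x i) (∏ᶠ j, Mhat i j (y j)) := by
      refine finprod_eq_prod_of_mulSupport_subset _ ?_
      intro i hi
      simp only [Function.mem_mulSupport] at hi
      by_contra hiA
      apply hi
      rw [hval y i fun j h => hiA (hAf1 i j h), hAfy i hiA, ψ1R]
    calc (∏ᶠ i, ψ (m x i) (y i))
        = ∏ i ∈ Af, ψ (m x i) (y i) := hL
      _ = ∏ i ∈ Af, ∏ k ∈ Af, ψ (x k) (Mhat k i (y i)) := Finset.prod_congr rfl hstep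
      _ = ∏ k ∈ Af, ∏ i ∈ Af, ψ (x k) (Mhat k i (y i)) := Finset.prod_comm
      _ = ∏ k ∈ Af, ψ (x k) (∏ i ∈ Af, Mhat k i (y i)) :=
          Finset.prod_congr rfl fun k _ => (map_prod (φR (x k)) _ Af).symm
      _ = ∏ k ∈ Af, ψ (x k) (∏ᶠ j, Mhat k j (y j)) :=
          Finset.prod_congr rfl fun k hk => by rw [hstep2 k hk]
      _ = ∏ᶠ i, ψ (x i) (∏ᶠ j, Mhat i j (y j)) := hR.symm
  refine ⟨fin_supp, ?_, ?_, ?_, ?_, hdual, ?_⟩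
  · -- continuity
    refine continuous_pi fun i => ?_
    have hrw : (fun y : Λ → R => ∏ᶠ j, Mhat i j (y j))
        = fun y : Λ → R => ∏ j ∈ (hΔ2.insert i).toFinset, Mhat i j (y j) := by
      funext y
      refine finprod_eq_prod_of_mulSupport_subset _ ?_
      rw [Set.Finite.coe_toFinset]
      exact key_supp y i
    rw [hrw]
    exact continuous_finset_prod _ fun j _ =>
      continuous_of_discreteTopology.comp (continuous_apply j)
  · -- monoid homomorphism
    constructor
    · intro a b
      funext i
      show (∏ᶠ j, Mhat i j ((a * b) j))
          = (∏ᶠ j, Mhat i j (a j)) * ∏ᶠ j, Mhat i j (b j)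
      calc (∏ᶠ j, Mhat i j ((a * b) j))
          = ∏ᶠ j, (Mhat i j (a j) * Mhat i j (b j)) :=
            finprod_congr fun j => (hhom i j).1 (a j) (b j)
        _ = (∏ᶠ j, Mhat i j (a j)) * ∏ᶠ j, Mhat i j (b j) :=
            finprod_mul_distrib (fin_supp a i) (fin_supp b i)
    · funext i
      show (∏ᶠ j, Mhat i j ((1 : Λ → R) j)) = 1
      calc (∏ᶠ j, Mhat i j ((1 : Λ → R) j)) = ∏ᶠ _ : Λ, (1 : R) :=
            finprod_congr fun j => (hhom i j).2
        _ = 1 := finprod_one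
  · -- locality
    refine hΔ1.subset ?_
    intro i hi
    obtain ⟨y, hy⟩ := hi
    by_contra hi1
    exact hy (hval y i fun j h => hi1 (hΔ1A i j h))
  · -- preservation of finite support
    intro y hy
    refine ((hΔ1.union hy).subset ?_)
    intro i hi
    simp only [Function.mem_mulSupport] at hi
    by_contra hiA
    simp only [Set.mem_union, not_or] at hiA
    obtain ⟨h1, h2⟩ := hiA
    apply hi
    rw [hval y i fun j h => h1 (hΔ1A i j h)]
    exact of_not_not (fun h => h2 h)
  · -- uniqueness
    intro g hg y
    have h2 : ∀ x : Λ → S,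
        (∏ᶠ i, ψ (x i) ((g y).1 i)) = ∏ᶠ i, ψ (x i) (∏ᶠ j, Mhat i j (y.1 j)) :=
      fun x => (hg x y).symm.trans (hdual x y.1 y.2)
    funext i0
    refine hψ3 _ _ fun s => ?_
    have ev : ∀ z : Λ → R,
        (∏ᶠ i, ψ (Function.update (1 : Λ → S) i0 s i) (z i)) = ψ s (z i0) := by
      intro z
      have h1 : ∀ j : Λ, j ≠ i0 → ψ (Function.update (1 : Λ → S) i0 s j) (z j) = 1 := by
        intro j hj
        rw [Function.update_of_ne hj]
        simp only [Pi.one_apply]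
        exact ψ1L (z j)
      calc (∏ᶠ i, ψ (Function.update (1 : Λ → S) i0 s i) (z i))
          = ψ (Function.update (1 : Λ → S) i0 s i0) (z i0) := finprod_eq_single _ i0 h1
        _ = ψ s (z i0) := by rw [Function.update_self]
    have hx := h2 (Function.update (1 : Λ → S) i0 s)
    rw [ev, ev] at hx
    exact hx
end

section
/- Let Λ be a countably infinite set and let S, R, T be finite commutative monoids such that S is T-dual to R with duality function ψ, and let Ψ be the induced duality function on S^Λ × R^Λ_fin. A map m : S^Λ → S^Λ admits a dual map with respect to Ψ — that is, a map m̂ : R^Λ_fin → R^Λ_fin with Ψ(m(x),y) = Ψ(x,m̂(y)) for all x ∈ S^Λ and y ∈ R^Λ_fin, which is then necessarily unique — if and only if m is a continuous monoid homomorphism from S^Λ (with the product topology) to itself. -/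
open Function

section Aux

variable {Λ S R T : Type*} [CommMonoid S] [CommMonoid R] [CommMonoid T]

theorem psi_one_right (ψ : S → R → T)
    (hψ4 : ∀ g : R → T, IsMonoidHomFun g ↔ ∃ x : S, g = fun y => ψ x y) (x : S) :
    ψ x 1 = 1 := ((hψ4 (fun y => ψ x y)).mpr ⟨x, rfl⟩).2

theorem psi_mul_right (ψ : S → R → T)
    (hψ4 : ∀ g : R → T, IsMonoidHomFun g ↔ ∃ x : S, g = fun y => ψ x y) (x : S) (a b : R) :
    ψ x (a * b) = ψ x a * ψ x b := ((hψ4 (fun y => ψ x y)).mpr ⟨x, rfl⟩).1 a b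

theorem psi_one_left (ψ : S → R → T)
    (hψ2 : ∀ f : S → T, IsMonoidHomFun f ↔ ∃ y : R, f = fun x => ψ x y) (y : R) :
    ψ 1 y = 1 := ((hψ2 (fun x => ψ x y)).mpr ⟨y, rfl⟩).2

theorem psi_mul_left (ψ : S → R → T)
    (hψ2 : ∀ f : S → T, IsMonoidHomFun f ↔ ∃ y : R, f = fun x => ψ x y) (a b : S) (y : R) :
    ψ (a * b) y = ψ a y * ψ b y := ((hψ2 (fun x => ψ x y)).mpr ⟨y, rfl⟩).1 a b

theorem Psi_support_subset (ψ : S → R → T)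
    (hψ4 : ∀ g : R → T, IsMonoidHomFun g ↔ ∃ x : S, g = fun y => ψ x y)
    (x : Λ → S) (z : Λ → R) :
    mulSupport (fun i => ψ (x i) (z i)) ⊆ mulSupport z := by
  intro i hi
  simp only [mem_mulSupport] at hi ⊢
  intro h
  exact hi (by rw [h, psi_one_right ψ hψ4])

/-- Evaluation of `Ψ` against a single-coordinate test function `y`. -/
theorem Psi_single_right [DecidableEq Λ] (ψ : S → R → T)
    (hψ4 : ∀ g : R → T, IsMonoidHomFun g ↔ ∃ x : S, g = fun y => ψ x y)
    (x : Λ → S) (j : Λ) (r : R) :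
    (∏ᶠ i, ψ (x i) ((Pi.mulSingle j r : Λ → R) i)) = ψ (x j) r := by
  rw [finprod_eq_single _ j fun b hb => by
    rw [Pi.mulSingle_eq_of_ne hb, psi_one_right ψ hψ4], Pi.mulSingle_eq_same]

theorem Psi_single_left [DecidableEq Λ] (ψ : S → R → T)
    (hψ2 : ∀ f : S → T, IsMonoidHomFun f ↔ ∃ y : R, f = fun x => ψ x y)
    (s : S) (j : Λ) (z : Λ → R) :
    (∏ᶠ i, ψ ((Pi.mulSingle j s : Λ → S) i) (z i)) = ψ s (z j) := by
  rw [finprod_eq_single _ j fun b hb => by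
    rw [Pi.mulSingle_eq_of_ne hb, psi_one_left ψ hψ2], Pi.mulSingle_eq_same]

/-- Separation in the first variable. -/
theorem Psi_sep_left (ψ : S → R → T)
    (hψ1 : ∀ x₁ x₂ : S, (∀ y : R, ψ x₁ y = ψ x₂ y) → x₁ = x₂)
    (hψ4 : ∀ g : R → T, IsMonoidHomFun g ↔ ∃ x : S, g = fun y => ψ x y)
    (x x' : Λ → S)
    (h : ∀ z : FinSuppFun Λ R, (∏ᶠ i, ψ (x i) (z.1 i)) = ∏ᶠ i, ψ (x' i) (z.1 i)) :
    x = x' := by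
  classical
  funext j
  refine hψ1 _ _ fun r => ?_
  have := h ⟨Pi.mulSingle j r, (Set.finite_singleton j).subset Pi.mulSupport_mulSingle_subset⟩
  rwa [Psi_single_right ψ hψ4, Psi_single_right ψ hψ4] at this

/-- Separation in the second variable. -/
theorem Psi_sep_right (ψ : S → R → T)
    (hψ2 : ∀ f : S → T, IsMonoidHomFun f ↔ ∃ y : R, f = fun x => ψ x y)
    (hψ3 : ∀ y₁ y₂ : R, (∀ x : S, ψ x y₁ = ψ x y₂) → y₁ = y₂)
    (z z' : Λ → R)
    (h : ∀ x : Λ → S, (∏ᶠ i, ψ (x i) (z i)) = ∏ᶠ i, ψ (x i) (z' i)) :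
    z = z' := by
  classical
  funext j
  refine hψ3 _ _ fun s => ?_
  have := h (Pi.mulSingle j s)
  rwa [Psi_single_left ψ hψ2, Psi_single_left ψ hψ2] at this

/-- `Ψ` is multiplicative in the first variable. -/
theorem Psi_mul_fst (ψ : S → R → T)
    (hψ2 : ∀ f : S → T, IsMonoidHomFun f ↔ ∃ y : R, f = fun x => ψ x y)
    (hψ4 : ∀ g : R → T, IsMonoidHomFun g ↔ ∃ x : S, g = fun y => ψ x y)
    (x x' : Λ → S) {z : Λ → R} (hz : (mulSupport z).Finite) :
    (∏ᶠ i, ψ (x i * x' i) (z i)) = (∏ᶠ i, ψ (x i) (z i)) * ∏ᶠ i, ψ (x' i) (z i) := by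
  rw [← finprod_mul_distrib (hz.subset (Psi_support_subset ψ hψ4 x z))
    (hz.subset (Psi_support_subset ψ hψ4 x' z))]
  exact finprod_congr fun i => psi_mul_left ψ hψ2 _ _ _

theorem Psi_eq_of_eqOn (ψ : S → R → T)
    (hψ4 : ∀ g : R → T, IsMonoidHomFun g ↔ ∃ x : S, g = fun y => ψ x y)
    {x x' : Λ → S} {z : Λ → R} (hz : (mulSupport z).Finite)
    (h : ∀ i ∈ mulSupport z, x i = x' i) :
    (∏ᶠ i, ψ (x i) (z i)) = ∏ᶠ i, ψ (x' i) (z i) := by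
  rw [finprod_eq_prod_of_mulSupport_subset _ (s := hz.toFinset)
      (fun i hi => hz.mem_toFinset.2 (Psi_support_subset ψ hψ4 x z hi)),
    finprod_eq_prod_of_mulSupport_subset _ (s := hz.toFinset)
      (fun i hi => hz.mem_toFinset.2 (Psi_support_subset ψ hψ4 x' z hi))]
  exact Finset.prod_congr rfl fun i hi => by rw [h i (hz.mem_toFinset.1 hi)]

theorem prod_mulSingle_eq [DecidableEq Λ] (I : Finset Λ) (x : Λ → S) :
    (∏ j ∈ I, Pi.mulSingle j (x j)) = fun i => if i ∈ I then x i else 1 := by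
  funext i
  rw [Finset.prod_apply]
  simp only [Pi.mulSingle_apply]
  exact Finset.prod_ite_eq I i x

/-- Every continuous monoid hom `χ : S^Λ → T` is of the form `Ψ(·, ŷ)` for a finitely
supported `ŷ`. -/
theorem char_repr [TopologicalSpace S] [DiscreteTopology S]
    [TopologicalSpace T] [DiscreteTopology T]
    (ψ : S → R → T)
    (hψ2 : ∀ f : S → T, IsMonoidHomFun f ↔ ∃ y : R, f = fun x => ψ x y)
    (hψ4 : ∀ g : R → T, IsMonoidHomFun g ↔ ∃ x : S, g = fun y => ψ x y)
    (χ : (Λ → S) → T) (hcont : Continuous χ) (hhom : IsMonoidHomFun χ) :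
    ∃ yhat : FinSuppFun Λ R, ∀ x : Λ → S, χ x = ∏ᶠ i, ψ (x i) (yhat.1 i) := by
  classical
  -- the set where χ = 1 is open and contains 1
  obtain ⟨I, u, hu, hpi⟩ := (isOpen_pi_iff.1 (hcont.isOpen_preimage {1} (isOpen_discrete _)))
    1 (by simp [hhom.2])
  have key : ∀ x : Λ → S, (∀ i ∈ I, x i = 1) → χ x = 1 := by
    intro x hx
    exact hpi (fun i hi => by rw [hx i hi]; exact (hu i hi).2)
  -- χ depends only on the coordinates in I
  have hdep : ∀ x : Λ → S, χ x = χ (fun i => if i ∈ I then x i else 1) := by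
    intro x
    have hx : x = (fun i => if i ∈ I then x i else 1) * fun i => if i ∈ I then 1 else x i := by
      funext i; by_cases hi : i ∈ I <;> simp [hi]
    calc χ x = χ (fun i => if i ∈ I then x i else 1) *
        χ (fun i => if i ∈ I then 1 else x i) := by rw [← hhom.1, ← hx]
      _ = χ (fun i => if i ∈ I then x i else 1) := by
          rw [key (fun i => if i ∈ I then 1 else x i) (fun i hi => by simp [hi]), mul_one]
  -- bundle χ
  let χm : (Λ → S) →* T := ⟨⟨χ, hhom.2⟩, hhom.1⟩
  -- the coordinate characters
  have hcoord : ∀ j : Λ, ∃ r : R, (fun s => χ (Pi.mulSingle j s)) = fun s => ψ s r := by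
    intro j
    refine (hψ2 _).mp ⟨fun a b => ?_, ?_⟩
    · show χ (Pi.mulSingle j (a * b)) = χ (Pi.mulSingle j a) * χ (Pi.mulSingle j b)
      rw [Pi.mulSingle_mul]; exact hhom.1 _ _
    · show χ (Pi.mulSingle j 1) = 1
      rw [Pi.mulSingle_one]; exact hhom.2
  choose c hc using hcoord
  refine ⟨⟨fun i => if i ∈ I then c i else 1, (I.finite_toSet).subset fun i hi => by
    by_contra h; exact (mem_mulSupport.1 hi) (if_neg (by simpa using h))⟩, fun x => ?_⟩
  have h1 : χ x = ∏ j ∈ I, ψ (x j) (c j) := by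
    rw [hdep x, ← prod_mulSingle_eq I x]
    rw [show χ (∏ j ∈ I, Pi.mulSingle j (x j)) = χm (∏ j ∈ I, Pi.mulSingle j (x j)) from rfl,
      map_prod]
    exact Finset.prod_congr rfl fun j _ => congrFun (hc j) (x j)
  rw [h1, finprod_eq_prod_of_mulSupport_subset _ (s := I) ?side]
  · exact Finset.prod_congr rfl fun j hj => by simp only [Subtype.coe_mk]; rw [if_pos hj]
  case side =>
    intro i hi
    simp only [mem_mulSupport] at hi
    by_contra h
    exact hi (by
      show ψ (x i) (if i ∈ I then c i else 1) = 1
      rw [if_neg (by simpa using h), psi_one_right ψ hψ4])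

end Aux

/-- **Existence of dual maps.** Let `S` be `T`-dual to `R` with duality function `ψ`
(`S`, `R`, `T` finite commutative monoids), and let `Ψ(x,y) = ∏ᶠ i, ψ (x i) (y i)` be the
induced duality function on `S^Λ × R^Λ_fin`. A map `m : S^Λ → S^Λ` admits a dual map
`m̂ : R^Λ_fin → R^Λ_fin` with respect to `Ψ` (which is then necessarily unique) if and only
if `m` is a continuous monoid homomorphism of `S^Λ` (product topology, `S` discrete). -/
theorem dual_map_exists_iff_continuous_monoid_hom
    {Λ S R T : Type*} [Countable Λ] [Infinite Λ]
    [CommMonoid S] [CommMonoid R] [CommMonoid T]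
    [Finite S] [Finite R] [Finite T]
    [TopologicalSpace S] [DiscreteTopology S]
    (ψ : S → R → T)
    (hψ1 : ∀ x₁ x₂ : S, (∀ y : R, ψ x₁ y = ψ x₂ y) → x₁ = x₂)
    (hψ2 : ∀ f : S → T, IsMonoidHomFun f ↔ ∃ y : R, f = fun x => ψ x y)
    (hψ3 : ∀ y₁ y₂ : R, (∀ x : S, ψ x y₁ = ψ x y₂) → y₁ = y₂)
    (hψ4 : ∀ g : R → T, IsMonoidHomFun g ↔ ∃ x : S, g = fun y => ψ x y)
    (m : (Λ → S) → (Λ → S)) :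
    ((∃ mhat : FinSuppFun Λ R → FinSuppFun Λ R,
        ∀ (x : Λ → S) (y : FinSuppFun Λ R),
          (∏ᶠ i, ψ (m x i) (y.1 i)) = ∏ᶠ i, ψ (x i) ((mhat y).1 i)) ↔
      (Continuous m ∧ IsMonoidHomFun m)) ∧
    (∀ mhat mhat' : FinSuppFun Λ R → FinSuppFun Λ R,
      (∀ (x : Λ → S) (y : FinSuppFun Λ R),
        (∏ᶠ i, ψ (m x i) (y.1 i)) = ∏ᶠ i, ψ (x i) ((mhat y).1 i)) →
      (∀ (x : Λ → S) (y : FinSuppFun Λ R),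
        (∏ᶠ i, ψ (m x i) (y.1 i)) = ∏ᶠ i, ψ (x i) ((mhat' y).1 i)) →
      mhat = mhat') := by
  classical
  letI : TopologicalSpace T := ⊥
  haveI : DiscreteTopology T := ⟨rfl⟩
  haveI : ContinuousMul T := ⟨continuous_of_discreteTopology⟩
  constructor
  · constructor
    · -- a dual map forces m to be a continuous monoid hom
      rintro ⟨mhat, hm⟩
      have hhom : IsMonoidHomFun m := by
        constructor
        · intro x x'
          apply Psi_sep_left ψ hψ1 hψ4
          intro z
          calc (∏ᶠ i, ψ (m (x * x') i) (z.1 i))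
              = ∏ᶠ i, ψ ((x * x') i) ((mhat z).1 i) := hm _ z
            _ = (∏ᶠ i, ψ (x i) ((mhat z).1 i)) * ∏ᶠ i, ψ (x' i) ((mhat z).1 i) :=
                Psi_mul_fst ψ hψ2 hψ4 x x' (mhat z).2
            _ = (∏ᶠ i, ψ (m x i) (z.1 i)) * ∏ᶠ i, ψ (m x' i) (z.1 i) := by
                rw [hm x z, hm x' z]
            _ = ∏ᶠ i, ψ ((m x * m x') i) (z.1 i) := (Psi_mul_fst ψ hψ2 hψ4 _ _ z.2).symm
        · apply Psi_sep_left ψ hψ1 hψ4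
          intro z
          calc (∏ᶠ i, ψ (m 1 i) (z.1 i))
              = ∏ᶠ i, ψ ((1 : Λ → S) i) ((mhat z).1 i) := hm 1 z
            _ = 1 := finprod_eq_one_of_forall_eq_one fun i => psi_one_left ψ hψ2 _
            _ = ∏ᶠ i, ψ ((1 : Λ → S) i) (z.1 i) :=
                (finprod_eq_one_of_forall_eq_one fun i => psi_one_left ψ hψ2 _).symm
      have hcont : Continuous m := by
        rw [continuous_pi_iff]
        intro j
        set d : R → FinSuppFun Λ R := fun r =>
          mhat ⟨Pi.mulSingle j r, (Set.finite_singleton j).subset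
            Pi.mulSupport_mulSingle_subset⟩ with hd
        have hFfin : (⋃ r : R, mulSupport (d r).1).Finite :=
          Set.finite_iUnion fun r => (d r).2
        set F : Set Λ := ⋃ r : R, mulSupport (d r).1 with hF
        haveI := hFfin.to_subtype
        have key : ∀ x x' : Λ → S, (∀ i ∈ F, x i = x' i) → m x j = m x' j := by
          intro x x' hxx
          apply hψ1
          intro r
          have e : ∀ w : Λ → S, ψ (m w j) r = ∏ᶠ i, ψ (w i) ((d r).1 i) := by
            intro w
            rw [← Psi_single_right ψ hψ4 (m w) j r]
            exact hm w ⟨Pi.mulSingle j r, (Set.finite_singleton j).subset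
              Pi.mulSupport_mulSingle_subset⟩
          rw [e x, e x']
          exact Psi_eq_of_eqOn ψ hψ4 (d r).2 fun i hi =>
            hxx i (Set.mem_iUnion.2 ⟨r, hi⟩)
        have hfe : (fun x : Λ → S => m x j) =
            (fun u : F → S => m (fun i => if h : i ∈ F then u ⟨i, h⟩ else 1) j) ∘
              (fun (x : Λ → S) (i : F) => x i.1) := by
          funext x
          exact key x _ fun i hi => by simp [dif_pos hi]
        rw [hfe]
        exact Continuous.comp continuous_of_discreteTopology
          (continuous_pi fun i => continuous_apply i.1)
      exact ⟨hcont, hhom⟩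
    · -- conversely, a continuous monoid hom admits a dual map
      rintro ⟨hcont, hhom⟩
      have H : ∀ y : FinSuppFun Λ R, ∃ yhat : FinSuppFun Λ R,
          ∀ x, (∏ᶠ i, ψ (m x i) (y.1 i)) = ∏ᶠ i, ψ (x i) (yhat.1 i) := by
        intro y
        have hΨc : Continuous (fun z : Λ → S => ∏ᶠ i, ψ (z i) (y.1 i)) := by
          have he : (fun z : Λ → S => ∏ᶠ i, ψ (z i) (y.1 i)) =
              fun z => ∏ i ∈ y.2.toFinset, ψ (z i) (y.1 i) := by
            funext z
            exact finprod_eq_prod_of_mulSupport_subset _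
              fun i hi => y.2.mem_toFinset.2 (Psi_support_subset ψ hψ4 z y.1 hi)
          rw [he]
          exact continuous_finset_prod _ fun i _ =>
            Continuous.comp (f := fun z : Λ → S => z i) (g := fun s => ψ s (y.1 i))
              continuous_of_discreteTopology (continuous_apply i)
        refine char_repr ψ hψ2 hψ4 (fun x => ∏ᶠ i, ψ (m x i) (y.1 i))
          (hΨc.comp hcont) ⟨fun a b => ?_, ?_⟩
        · show (∏ᶠ i, ψ (m (a * b) i) (y.1 i)) =
              (∏ᶠ i, ψ (m a i) (y.1 i)) * ∏ᶠ i, ψ (m b i) (y.1 i)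
          rw [hhom.1 a b]
          exact Psi_mul_fst ψ hψ2 hψ4 (m a) (m b) y.2
        · show (∏ᶠ i, ψ (m 1 i) (y.1 i)) = 1
          rw [hhom.2]
          exact finprod_eq_one_of_forall_eq_one fun i => psi_one_left ψ hψ2 _
      choose mhat hmhat using H
      exact ⟨mhat, fun x y => hmhat y x⟩
  · -- uniqueness of the dual map
    intro mhat mhat' h h'
    funext y
    apply Subtype.ext
    apply Psi_sep_right ψ hψ2 hψ3
    intro x
    rw [← h x y, h' x y]
end

section
/- Let Λ be a countably infinite set and S a finite commutative monoid; equip S^Λ with the product topology (S discrete) and its Borel σ-algebra. Let 𝕍 be a finite-dimensional real vector space, let v₁,…,vₙ ∈ 𝕍 be affinely independent, and let (f_k)_{k∈K} be a family of measurable functions f_k : S^Λ → 𝕍, each taking values in the set {v₁,…,vₙ}. Then the family (f_k)_{k∈K} is distribution determining if and only if it is weakly distribution determining. -/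
/-!
A function `f` with values in an affinely independent family `v` factors as `v ∘ g` through the
index type, so its law is the pushforward of the law of `g`, and its mean `∫ f ∂μ` is the affine
combination of the `v i` with weights `μ (g ⁻¹' {i})`. Affine independence makes such barycentric
coordinates unique, so the mean of `f` determines the law of `g`, hence that of `f`; conversely,
the law of any `f` determines its mean.
-/

open Function MeasureTheory

theorem AffineIndependent.measure_eq_of_integral_eq {V ι : Type*} [NormedAddCommGroup V]
    [NormedSpace ℝ V] [CompleteSpace V] [Fintype ι] [MeasurableSpace ι]
    [MeasurableSingletonClass ι] {v : ι → V} (hv : AffineIndependent ℝ v)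
    {ν ν' : Measure ι} [IsProbabilityMeasure ν] [IsProbabilityMeasure ν']
    (h : ∫ i, v i ∂ν = ∫ i, v i ∂ν') : ν = ν' := by
  have weights_sum (ρ : Measure ι) [IsProbabilityMeasure ρ] : ∑ i, ρ.real {i} = 1 := by simp
  have mean_eq (ρ : Measure ι) [IsProbabilityMeasure ρ] :
      Finset.univ.affineCombination ℝ v (fun i ↦ ρ.real {i}) = ∫ i, v i ∂ρ := by
    rw [Finset.affineCombination_eq_linear_combination _ _ _ (weights_sum ρ),
      integral_fintype Integrable.of_finite]
  have weights_eq := (affineIndependent_iff_eq_of_fintype_affineCombination_eq ℝ v).1 hv _ _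
    (weights_sum ν) (weights_sum ν') (by rw [mean_eq, mean_eq, h])
  exact Measure.ext_of_measureReal_singleton (congrFun weights_eq)

theorem Measurable.exists_measurable_comp_eq_of_mem_range {X V ι : Type*} [MeasurableSpace X]
    [MeasurableSpace V] [MeasurableSingletonClass V] [Countable ι] [MeasurableSpace ι] {f : X → V}
    (hf : Measurable f) {v : ι → V} (hv : Injective v) (hrange : ∀ x, f x ∈ Set.range v) :
    ∃ g : X → ι, Measurable g ∧ v ∘ g = f := by
  choose g hg using hrange
  refine ⟨g, measurable_to_countable' fun i ↦ ?_, funext hg⟩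
  have : g ⁻¹' {i} = f ⁻¹' {v i} := by
    ext x
    simp [← hg x, hv.eq_iff]
  exact this ▸ hf (measurableSet_singleton _)

theorem AffineIndependent.map_eq_map_of_integral_eq {X V ι : Type*} [NormedAddCommGroup V]
    [NormedSpace ℝ V] [CompleteSpace V] [MeasurableSpace X] [MeasurableSpace V] [BorelSpace V]
    [Fintype ι] [MeasurableSpace ι] [DiscreteMeasurableSpace ι] {v : ι → V}
    (hv : AffineIndependent ℝ v) {f : X → V}
    (hf : Measurable f) (hrange : ∀ x, f x ∈ Set.range v) {μ μ' : Measure X}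
    [IsProbabilityMeasure μ] [IsProbabilityMeasure μ'] (h : ∫ x, f x ∂μ = ∫ x, f x ∂μ') :
    μ.map f = μ'.map f := by
  obtain ⟨g, hg, rfl⟩ := hf.exists_measurable_comp_eq_of_mem_range hv.injective hrange
  have hv_meas : Measurable v := Measurable.of_discrete
  have integral_eq (ρ : Measure X) : ∫ x, v (g x) ∂ρ = ∫ i, v i ∂(ρ.map g) :=
    (integral_map hg.aemeasurable StronglyMeasurable.of_discrete.aestronglyMeasurable).symm
  have map_g_eq : μ.map g = μ'.map g := by
    have := Measure.isProbabilityMeasure_map (μ := μ) hg.aemeasurable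
    have := Measure.isProbabilityMeasure_map (μ := μ') hg.aemeasurable
    exact hv.measure_eq_of_integral_eq (by rwa [← integral_eq, ← integral_eq])
  rw [← Measure.map_map hv_meas hg, ← Measure.map_map hv_meas hg, map_g_eq]

theorem distribution_determining_iff_weakly_general
    {Λ S : Type*}
    [MeasurableSpace (Λ → S)]
    {V : Type*} [NormedAddCommGroup V] [NormedSpace ℝ V] [FiniteDimensional ℝ V]
    [MeasurableSpace V] [BorelSpace V]
    {K : Type*} (f : K → (Λ → S) → V)
    (hmeas : ∀ k, Measurable (f k))
    {n : ℕ} (v : Fin n → V)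
    (hv : AffineIndependent ℝ v)
    (hrange : ∀ (k : K) (x : Λ → S), f k x ∈ Set.range v) :
    ((∀ μ μ' : Measure (Λ → S), IsProbabilityMeasure μ → IsProbabilityMeasure μ' →
        (∀ k, ∫ x, f k x ∂μ = ∫ x, f k x ∂μ') → μ = μ') ↔
      (∀ μ μ' : Measure (Λ → S), IsProbabilityMeasure μ → IsProbabilityMeasure μ' →
        (∀ k, μ.map (f k) = μ'.map (f k)) → μ = μ')) := by
  constructor
  · intro hdet μ μ' hμ hμ' hmap
    refine hdet μ μ' hμ hμ' fun k ↦ ?_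
    exact ProbabilityTheory.IdentDistrib.integral_eq
      ⟨(hmeas k).aemeasurable, (hmeas k).aemeasurable, hmap k⟩
  · intro hweak μ μ' hμ hμ' hint
    exact hweak μ μ' hμ hμ' fun k ↦ hv.map_eq_map_of_integral_eq (hmeas k) (hrange k) (hint k)

/-- **Equality of notions.** For a family of measurable functions on `S^Λ` taking values in
an affinely independent finite set `{v 1, …, v n}` of a finite-dimensional real vector
space, being distribution determining is equivalent to being weakly distribution
determining. -/
theorem distribution_determining_iff_weakly
    {Λ S : Type*} [Countable Λ] [Infinite Λ]
    [CommMonoid S] [Finite S]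
    [TopologicalSpace S] [DiscreteTopology S]
    [MeasurableSpace (Λ → S)] [BorelSpace (Λ → S)]
    {V : Type*} [NormedAddCommGroup V] [NormedSpace ℝ V] [FiniteDimensional ℝ V]
    [MeasurableSpace V] [BorelSpace V]
    {K : Type*} (f : K → (Λ → S) → V)
    (hmeas : ∀ k, Measurable (f k))
    {n : ℕ} (v : Fin n → V)
    (hv : AffineIndependent ℝ v)
    (hrange : ∀ (k : K) (x : Λ → S), f k x ∈ Set.range v) :
    ((∀ μ μ' : Measure (Λ → S), IsProbabilityMeasure μ → IsProbabilityMeasure μ' →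
        (∀ k, ∫ x, f k x ∂μ = ∫ x, f k x ∂μ') → μ = μ') ↔
      (∀ μ μ' : Measure (Λ → S), IsProbabilityMeasure μ → IsProbabilityMeasure μ' →
        (∀ k, μ.map (f k) = μ'.map (f k)) → μ = μ')) :=
  distribution_determining_iff_weakly_general f hmeas v hv hrange
end

section
/- Let Λ be a countably infinite set, let S and R be finite commutative monoids, and let T be a finite submonoid of ℂ under multiplication. Assume S is T-dual to R with duality function ψ : S × R → T. Then the family of functions (x ↦ Ψ(x,y))_{y∈R^Λ_fin} from S^Λ to ℂ is distribution determining: any two Borel probability measures μ, μ' on S^Λ (with the product topology and Borel σ-algebra) satisfying ∫ Ψ(x,y) dμ(x) = ∫ Ψ(x,y) dμ'(x) for all y ∈ R^Λ_fin are equal. -/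
open Function MeasureTheory

open scoped Pointwise

/-!
The characters `ψ(·, y)` form a multiplicatively closed family of functions on the finite
set `S` that contains `1` and separates points, and so do their coordinatewise products on
`S^J` for a finite `J ⊆ Λ`. Such a family spans all functions, since the indicator of a point
`s` is the product over `t ≠ s` of `(f - f t) / (f s - f t)`, with `f` in the algebra it
spans separating `s` from `t`. Hence the hypothesis forces the finite-dimensional marginals
of `μ` and `μ'` to agree, and a finite measure on a product is determined by its marginals.
-/

theorem Subalgebra.eq_top_of_separatesPoints_of_finite {X K : Type*} [Finite X] [Field K]
    (A : Subalgebra K (X → K)) (hA : ∀ a b, a ≠ b → ∃ f ∈ A, f a ≠ f b) : A = ⊤ := by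
  classical
  have := Fintype.ofFinite X
  have single_mem : ∀ s, Pi.single s 1 ∈ A := by
    intro s
    choose! f hfA hf using fun t (ht : t ≠ s) => hA t s ht
    have hδ : Pi.single s 1 = ∏ t ∈ Finset.univ.erase s,
        (f t s - f t t)⁻¹ • (f t - algebraMap K (X → K) (f t t)) := by
      ext x
      simp only [Finset.prod_apply, Pi.smul_apply, Pi.sub_apply, Pi.algebraMap_apply,
        Algebra.algebraMap_self, RingHom.id_apply, smul_eq_mul]
      by_cases hx : x = s
      · subst hx
        refine (Pi.single_eq_same _ _).trans (Finset.prod_eq_one fun t ht => ?_).symm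
        exact inv_mul_cancel₀ (sub_ne_zero.2 (hf t (Finset.ne_of_mem_erase ht)).symm)
      · rw [Pi.single_eq_of_ne hx]
        exact (Finset.prod_eq_zero (Finset.mem_erase.2 ⟨hx, Finset.mem_univ x⟩) (by simp)).symm
    rw [hδ]
    exact prod_mem fun t ht => A.smul_mem
      (sub_mem (hfA t (Finset.ne_of_mem_erase ht)) (A.algebraMap_mem _)) _
  refine eq_top_iff.2 fun g _ => ?_
  rw [← Finset.univ_sum_single g]
  refine sum_mem fun s _ => ?_
  have hsingle : Pi.single s (g s) = g s • Pi.single s (1 : K) := by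
    rw [← Pi.single_smul', smul_eq_mul, mul_one]
  exact hsingle ▸ A.smul_mem (single_mem s) _

theorem span_range_eq_top_of_separatesPoints {ι X K : Type*} [Finite X] [Field K]
    {v : ι → X → K} (hone : 1 ∈ Set.range v) (hmul : ∀ i j, v i * v j ∈ Set.range v)
    (hsep : ∀ a b, a ≠ b → ∃ i, v i a ≠ v i b) :
    Submodule.span K (Set.range v) = ⊤ := by
  have hmul_mem : ∀ f g, f ∈ Submodule.span K (Set.range v) →
      g ∈ Submodule.span K (Set.range v) → f * g ∈ Submodule.span K (Set.range v) := by
    intro f g hf hg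
    have hrange : Set.range v * Set.range v ⊆ Set.range v := by
      rintro _ ⟨_, ⟨i, rfl⟩, _, ⟨j, rfl⟩, rfl⟩
      exact hmul i j
    have := Submodule.mul_mem_mul hf hg
    rw [Submodule.span_mul_span] at this
    exact Submodule.span_mono hrange this
  have := ((Submodule.span K (Set.range v)).toSubalgebra (Submodule.subset_span hone)
    hmul_mem).eq_top_of_separatesPoints_of_finite fun a b hab => by
      obtain ⟨i, hi⟩ := hsep a b hab
      exact ⟨v i, Submodule.subset_span ⟨i, rfl⟩, hi⟩
  simpa using congrArg Subalgebra.toSubmodule this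

theorem MeasureTheory.Measure.ext_of_forall_integral_eq_of_span_eq_top {X 𝕜 : Type*} [Finite X] [MeasurableSpace X]
    [MeasurableSingletonClass X] [RCLike 𝕜] {μ ν : Measure X} [IsFiniteMeasure μ]
    [IsFiniteMeasure ν] {s : Set (X → 𝕜)} (hs : Submodule.span 𝕜 s = ⊤)
    (h : ∀ f ∈ s, ∫ x, f x ∂μ = ∫ x, f x ∂ν) : μ = ν := by
  have integral_eq : ∀ f : X → 𝕜, ∫ x, f x ∂μ = ∫ x, f x ∂ν := fun f => by
    have hf : f ∈ Submodule.span 𝕜 s := hs ▸ Submodule.mem_top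
    induction hf using Submodule.span_induction with
    | mem f hf => exact h f hf
    | zero => simp
    | add f g _ _ hf hg =>
      simp only [Pi.add_apply]
      rw [integral_add .of_finite .of_finite, integral_add .of_finite .of_finite, hf, hg]
    | smul c f _ hf => simp only [Pi.smul_apply, integral_smul, hf]
  refine (ext_iff_measureReal_singleton).2 fun a => ?_
  have := integral_eq (({a} : Set X).indicator fun _ => 1)
  rw [integral_indicator_const _ (measurableSet_singleton a),
    integral_indicator_const _ (measurableSet_singleton a)] at this
  exact smul_left_injective ℝ one_ne_zero this

def piProdFamily {ι X K F : Type*} [Fintype F] [CommMonoid K] (v : ι → X → K) (Y : F → ι) :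
    (F → X) → K :=
  fun a => ∏ j, v (Y j) (a j)

section piProdFamily

variable {ι X K F : Type*} [Fintype F]

theorem piProdFamily_mul_mem_range [CommMonoid K] {v : ι → X → K}
    (hmul : ∀ i j, v i * v j ∈ Set.range v) (Y Y' : F → ι) :
    piProdFamily v Y * piProdFamily v Y' ∈ Set.range (piProdFamily v) := by
  choose k hk using hmul
  refine ⟨fun j => k (Y j) (Y' j), funext fun a => ?_⟩
  simp only [piProdFamily, Pi.mul_apply, ← Finset.prod_mul_distrib, hk]

theorem piProdFamily_const [CommMonoid K] {v : ι → X → K} {i₀ : ι} (h₀ : v i₀ = 1) :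
    piProdFamily v (fun _ : F => i₀) = 1 := by
  ext a
  simp [piProdFamily, h₀]

theorem piProdFamily_update_const [CommMonoid K] [DecidableEq F] {v : ι → X → K} {i₀ : ι}
    (h₀ : v i₀ = 1) (j : F) (i : ι) (a : F → X) :
    piProdFamily v (update (fun _ => i₀) j i) a = v i (a j) := by
  refine (Fintype.prod_eq_single j fun k hk => ?_).trans (by simp)
  simp [update_of_ne hk, h₀]

theorem span_range_piProdFamily [Finite X] [Field K] {v : ι → X → K} {i₀ : ι} (h₀ : v i₀ = 1)
    (hmul : ∀ i j, v i * v j ∈ Set.range v) (hsep : ∀ a b, a ≠ b → ∃ i, v i a ≠ v i b) :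
    Submodule.span K (Set.range (piProdFamily (F := F) v)) = ⊤ := by
  classical
  refine span_range_eq_top_of_separatesPoints ⟨_, piProdFamily_const h₀⟩
    (piProdFamily_mul_mem_range hmul) fun a b hab => ?_
  obtain ⟨j, hj⟩ := Function.ne_iff.1 hab
  obtain ⟨i, hi⟩ := hsep _ _ hj
  exact ⟨update (fun _ => i₀) j i, by simpa [piProdFamily_update_const h₀] using hi⟩

end piProdFamily

theorem IsMonoidHomFun.mul {M N : Type*} [MulOneClass M] [CommMonoid N] {f g : M → N}
    (hf : IsMonoidHomFun f) (hg : IsMonoidHomFun g) : IsMonoidHomFun (f * g) :=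
  ⟨fun a b => by simp only [Pi.mul_apply, hf.1, hg.1, mul_mul_mul_comm], by simp [hf.2, hg.2]⟩

theorem finprod_extend_val_one {Λ R M : Type*} [One R] [CommMonoid M] {J : Finset Λ}
    (Y : J → R) {g : Λ → R → M} (hg : ∀ i, g i 1 = 1) :
    ∏ᶠ i, g i (extend Subtype.val Y 1 i) = ∏ j : J, g j (Y j) := by
  classical
  rw [finprod_eq_prod_of_mulSupport_subset (s := J), ← Finset.prod_coe_sort]
  · simp only [Subtype.val_injective.extend_apply]
  · intro i hi
    by_contra hiJ
    have hi' : ¬∃ j : J, (j : Λ) = i := fun ⟨j, hj⟩ => hiJ (hj ▸ j.2)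
    exact hi (by simp only [extend_apply' _ _ _ hi', Pi.one_apply, hg])

theorem psi_informative_of_complex_valued_general
    {Λ S R : Type*} [Countable Λ]
    [CommMonoid S] [CommMonoid R] [Finite S]
    [TopologicalSpace S] [DiscreteTopology S]
    [MeasurableSpace (Λ → S)] [BorelSpace (Λ → S)]
    (T : Submonoid ℂ)
    (ψ : S → R → T)
    (hψ1 : ∀ x₁ x₂ : S, (∀ y : R, ψ x₁ y = ψ x₂ y) → x₁ = x₂)
    (hψ2 : ∀ f : S → T, IsMonoidHomFun f ↔ ∃ y : R, f = fun x => ψ x y)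
    (hψ4 : ∀ g : R → T, IsMonoidHomFun g ↔ ∃ x : S, g = fun y => ψ x y)
    (μ μ' : Measure (Λ → S))
    (hμ : IsProbabilityMeasure μ) (hμ' : IsProbabilityMeasure μ')
    (h : ∀ y : Λ → R, (Function.mulSupport y).Finite →
      ∫ x, (∏ᶠ i, (ψ (x i) (y i) : ℂ)) ∂μ = ∫ x, (∏ᶠ i, (ψ (x i) (y i) : ℂ)) ∂μ') :
    μ = μ' := by
  let : MeasurableSpace S := ⊤
  have : BorelSpace S := ⟨borel_eq_top_of_discrete.symm⟩
  obtain rfl : ‹MeasurableSpace (Λ → S)› = MeasurableSpace.pi :=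
    BorelSpace.measurable_eq.trans Pi.borelSpace.measurable_eq.symm
  let χ : R → S → ℂ := fun y x => ψ x y
  have hχ_one : χ 1 = 1 := funext fun x => congrArg Subtype.val ((hψ4 _).2 ⟨x, rfl⟩).2
  have hχ_mul : ∀ y₁ y₂, χ y₁ * χ y₂ ∈ Set.range χ := fun y₁ y₂ => by
    obtain ⟨y₃, hy₃⟩ := (hψ2 _).1 (((hψ2 _).2 ⟨y₁, rfl⟩).mul ((hψ2 _).2 ⟨y₂, rfl⟩))
    exact ⟨y₃, funext fun x => (congrArg Subtype.val (congrFun hy₃ x)).symm⟩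
  have hχ_sep : ∀ a b, a ≠ b → ∃ y, χ y a ≠ χ y b := fun a b hab => by
    by_contra! hχ
    exact hab (hψ1 a b fun y => Subtype.ext (hχ y))
  refine IsProjectiveLimit.unique (P := fun J => μ.map J.restrict) (fun _ => rfl) fun J => ?_
  refine (Measure.ext_of_forall_integral_eq_of_span_eq_top
    (span_range_piProdFamily hχ_one hχ_mul hχ_sep) ?_).symm
  rintro _ ⟨Y, rfl⟩
  have hY : (mulSupport (extend Subtype.val Y 1)).Finite :=
    (Set.finite_range Subtype.val).subset
      (mulSupport_extend_one_subset.trans (Set.image_subset_range _ _))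
  have hΨ : ∀ x : Λ → S, ∏ᶠ i, (ψ (x i) (extend Subtype.val Y 1 i) : ℂ) =
      piProdFamily χ Y (J.restrict x) := fun x =>
    finprod_extend_val_one Y (g := fun i y => χ y (x i)) fun i => congrFun hχ_one (x i)
  rw [integral_map J.measurable_restrict.aemeasurable .of_discrete,
    integral_map J.measurable_restrict.aemeasurable .of_discrete]
  simpa only [hΨ] using h _ hY

/-- **Informativeness of `Ψ` for complex-valued `T`.** Let `S`, `R` be finite commutative
monoids and `T` a finite submonoid of `(ℂ, ·)`, with `S` being `T`-dual to `R` via `ψ`.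
Then the family `(x ↦ Ψ(x,y))_{y ∈ R^Λ_fin}`, where `Ψ(x,y) = ∏ᶠ i, ψ (x i) (y i) ∈ ℂ`, is
distribution determining: two Borel probability measures on `S^Λ` (product topology) giving
every `Ψ(·,y)` the same integral are equal. -/
theorem psi_informative_of_complex_valued
    {Λ S R : Type*} [Countable Λ] [Infinite Λ]
    [CommMonoid S] [CommMonoid R] [Finite S] [Finite R]
    [TopologicalSpace S] [DiscreteTopology S]
    [MeasurableSpace (Λ → S)] [BorelSpace (Λ → S)]
    (T : Submonoid ℂ) (hT : (T : Set ℂ).Finite)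
    (ψ : S → R → T)
    (hψ1 : ∀ x₁ x₂ : S, (∀ y : R, ψ x₁ y = ψ x₂ y) → x₁ = x₂)
    (hψ2 : ∀ f : S → T, IsMonoidHomFun f ↔ ∃ y : R, f = fun x => ψ x y)
    (hψ3 : ∀ y₁ y₂ : R, (∀ x : S, ψ x y₁ = ψ x y₂) → y₁ = y₂)
    (hψ4 : ∀ g : R → T, IsMonoidHomFun g ↔ ∃ x : S, g = fun y => ψ x y)
    (μ μ' : Measure (Λ → S))
    (hμ : IsProbabilityMeasure μ) (hμ' : IsProbabilityMeasure μ')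
    (h : ∀ y : Λ → R, (Function.mulSupport y).Finite →
      ∫ x, (∏ᶠ i, (ψ (x i) (y i) : ℂ)) ∂μ = ∫ x, (∏ᶠ i, (ψ (x i) (y i) : ℂ)) ∂μ') :
    μ = μ' :=
  psi_informative_of_complex_valued_general T ψ hψ1 hψ2 hψ4 μ μ' hμ hμ' h
end

section
/- Fix d ≥ 1. If μ and μ' are Borel probability measures on 𝒰 = U^{ℤ^d} such that ∫ 𝚿(x,y) dμ(x) = ∫ 𝚿(x,y) dμ'(x) for every y ∈ 𝒰_fin, then μ = μ'. (Equivalently: if X and X' are 𝒰-valued random variables with E[𝚿(X,y)] = E[𝚿(X',y)] for all y ∈ 𝒰_fin, then X and X' are equal in distribution.) -/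
open Function MeasureTheory

/-- The local duality function `ψ : U × U → {-1,0,1} ⊂ ℝ` on `U = {0,1} × {0,1}` (encoded as
`Bool × Bool`), `ψ((a₁,a₂),(b₁,b₂)) = (1 - a₁b₁)·(-1)^{a₂b₂}`. -/
def psiU (a b : Bool × Bool) : ℝ :=
  (if a.1 && b.1 then 0 else 1) * (if a.2 && b.2 then -1 else 1)

/-- Coefficients inverting the matrix `psiU`. -/
noncomputable def coefU : Bool × Bool → Bool × Bool → ℝ
  | (false, false), (false, _) => 0
  | (false, false), (true, _) => 1/2
  | (false, true), (false, _) => 0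
  | (false, true), (true, false) => 1/2
  | (false, true), (true, true) => -(1/2)
  | (true, false), (false, _) => 1/2
  | (true, false), (true, _) => -(1/2)
  | (true, true), (false, false) => 1/2
  | (true, true), (false, true) => -(1/2)
  | (true, true), (true, false) => -(1/2)
  | (true, true), (true, true) => 1/2

lemma coefU_psiU (a a' : Bool × Bool) :
    ∑ b : Bool × Bool, coefU a b * psiU a' b = if a' = a then 1 else 0 := by
  rcases a with ⟨a1, a2⟩; rcases a' with ⟨b1, b2⟩
  rcases a1 <;> rcases a2 <;> rcases b1 <;> rcases b2 <;>
    norm_num [Fintype.sum_prod_type, coefU, psiU]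

lemma psiU_neutral (a : Bool × Bool) : psiU a (false, false) = 1 := by
  simp [psiU]

lemma abs_psiU_le (a b : Bool × Bool) : |psiU a b| ≤ 1 := by
  unfold psiU
  split_ifs <;> norm_num

/-- **The duality is informative.** If two Borel probability measures `μ`, `μ'` on
`𝒰 = U^{ℤ^d}` (product topology, `U = Bool × Bool` discrete) satisfy
`∫ 𝚿(x,y) dμ(x) = ∫ 𝚿(x,y) dμ'(x)` for every finitely supported `y`, where
`𝚿(x,y) = ∏ᶠ i, ψ(x i, y i)`, then `μ = μ'`. -/
theorem duality_is_informative
    (d : ℕ) (hd : 1 ≤ d)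
    (μ μ' : Measure ((Fin d → ℤ) → Bool × Bool))
    (hμ : IsProbabilityMeasure μ) (hμ' : IsProbabilityMeasure μ')
    (h : ∀ y : (Fin d → ℤ) → Bool × Bool,
      {i : Fin d → ℤ | y i ≠ (false, false)}.Finite →
      ∫ x, (∏ᶠ i, psiU (x i) (y i)) ∂μ = ∫ x, (∏ᶠ i, psiU (x i) (y i)) ∂μ') :
    μ = μ' := by
  classical
  -- Step 1: equality of measures on singleton cylinders
  have key : ∀ (s : Finset (Fin d → ℤ)) (η : (Fin d → ℤ) → Bool × Bool),
      μ {x | ∀ i ∈ s, x i = η i} = μ' {x | ∀ i ∈ s, x i = η i} := by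
    intro s η
    set A : Set ((Fin d → ℤ) → Bool × Bool) := {x | ∀ i ∈ s, x i = η i} with hA
    have hAm : MeasurableSet A := by
      have : A = ⋂ i ∈ (s : Set (Fin d → ℤ)),
          (fun x : (Fin d → ℤ) → Bool × Bool => x i) ⁻¹' {η i} := by
        ext x; simp [A]
      rw [this]
      exact MeasurableSet.biInter s.countable_toSet
        (fun i _ => (measurable_pi_apply i) (measurableSet_singleton _))
    -- the extended y associated to p
    set yp : (∀ i ∈ s, Bool × Bool) → (Fin d → ℤ) → Bool × Bool :=
      fun p i => if h : i ∈ s then p i h else (false, false) with hyp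
    have hsupp : ∀ p, {i : Fin d → ℤ | yp p i ≠ (false, false)}
        ⊆ (s : Set (Fin d → ℤ)) := by
      intro p i hi
      simp only [Set.mem_setOf_eq, yp] at hi
      by_contra hin
      rw [Finset.mem_coe] at hin
      rw [dif_neg hin] at hi
      exact hi rfl
    -- finprod = finite product over s
    have hfin : ∀ p (x : (Fin d → ℤ) → Bool × Bool),
        (∏ᶠ i, psiU (x i) (yp p i)) = ∏ i ∈ s, psiU (x i) (yp p i) := by
      intro p x
      refine finprod_eq_prod_of_mulSupport_subset _ ?_
      intro i hi
      simp only [mulSupport, Set.mem_setOf_eq, yp] at hi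
      by_contra hin
      rw [Finset.mem_coe] at hin
      rw [dif_neg hin, psiU_neutral] at hi
      exact hi rfl
    -- measurability and integrability
    have hmeas : ∀ p, Measurable fun x : (Fin d → ℤ) → Bool × Bool =>
        ∏ᶠ i, psiU (x i) (yp p i) := by
      intro p
      have : (fun x : (Fin d → ℤ) → Bool × Bool => ∏ᶠ i, psiU (x i) (yp p i))
          = fun x => ∏ i ∈ s, psiU (x i) (yp p i) := funext (hfin p)
      rw [this]
      exact Finset.measurable_prod _ fun i _ =>
        (measurable_of_countable fun u : Bool × Bool => psiU u (yp p i)).comp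
          (measurable_pi_apply i)
    have hint : ∀ p (ν : Measure ((Fin d → ℤ) → Bool × Bool)), IsProbabilityMeasure ν →
        Integrable (fun x : (Fin d → ℤ) → Bool × Bool => ∏ᶠ i, psiU (x i) (yp p i)) ν := by
      intro p ν hν
      refine Integrable.mono' (integrable_const 1) (hmeas p).aestronglyMeasurable
        (ae_of_all _ fun x => ?_)
      rw [hfin p x, Real.norm_eq_abs, Finset.abs_prod]
      exact Finset.prod_le_one (fun i _ => abs_nonneg _) (fun i _ => abs_psiU_le _ _)
    -- pointwise expansion of the indicator
    have hexp : ∀ x : (Fin d → ℤ) → Bool × Bool,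
        (if ∀ i ∈ s, x i = η i then (1 : ℝ) else 0)
        = ∑ p ∈ s.pi (fun _ => (Finset.univ : Finset (Bool × Bool))),
            (∏ i ∈ s.attach, coefU (η i.1) (p i.1 i.2)) *
              ∏ᶠ i, psiU (x i) (yp p i) := by
      intro x
      rw [← Finset.prod_boole (s := s) (p := fun i => x i = η i)]
      have : ∀ i ∈ s, (if x i = η i then (1 : ℝ) else 0)
          = ∑ b ∈ (Finset.univ : Finset (Bool × Bool)), coefU (η i) b * psiU (x i) b := by
        intro i _
        rw [coefU_psiU (η i) (x i)]
      rw [Finset.prod_congr rfl this, Finset.prod_sum]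
      refine Finset.sum_congr rfl fun p hp => ?_
      rw [Finset.prod_mul_distrib, hfin p x]
      congr 1
      rw [← Finset.prod_attach s (fun i => psiU (x i) (yp p i))]
      refine Finset.prod_congr rfl fun i _ => ?_
      congr 1
      simp [yp, i.2]
    -- integrals of the indicator agree
    have hintA : ∫ x, (if ∀ i ∈ s, x i = η i then (1 : ℝ) else 0) ∂μ
        = ∫ x, (if ∀ i ∈ s, x i = η i then (1 : ℝ) else 0) ∂μ' := by
      rw [show (fun x : (Fin d → ℤ) → Bool × Bool =>
              if ∀ i ∈ s, x i = η i then (1 : ℝ) else 0)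
            = fun x => ∑ p ∈ s.pi (fun _ => (Finset.univ : Finset (Bool × Bool))),
                (∏ i ∈ s.attach, coefU (η i.1) (p i.1 i.2)) *
                  ∏ᶠ i, psiU (x i) (yp p i) from funext hexp]
      rw [integral_finset_sum _ fun p _ => ((hint p μ hμ).const_mul _),
        integral_finset_sum _ fun p _ => ((hint p μ' hμ').const_mul _)]
      refine Finset.sum_congr rfl fun p _ => ?_
      rw [integral_const_mul, integral_const_mul,
        h (yp p) (Set.Finite.subset s.finite_toSet (hsupp p))]
    -- indicator integral equals measure
    have hind : ∀ ν : Measure ((Fin d → ℤ) → Bool × Bool),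
        ∫ x, (if ∀ i ∈ s, x i = η i then (1 : ℝ) else 0) ∂ν = (ν A).toReal := by
      intro ν
      rw [show (fun x : (Fin d → ℤ) → Bool × Bool =>
              if ∀ i ∈ s, x i = η i then (1 : ℝ) else 0)
            = A.indicator (fun _ => (1 : ℝ)) by
          ext x
          by_cases hx : ∀ i ∈ s, x i = η i <;>
            simp [A, hx, Set.indicator_apply]]
      exact integral_indicator_one hAm
    rw [hind μ, hind μ'] at hintA
    exact (ENNReal.toReal_eq_toReal_iff' (measure_ne_top μ A) (measure_ne_top μ' A)).mp hintA
  -- Step 2: extend to all measurable cylinders, then to the whole σ-algebra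
  refine ext_of_generate_finite _ generateFrom_measurableCylinders.symm
    isPiSystem_measurableCylinders ?_ (by simp)
  intro t ht
  obtain ⟨s, S, -, rfl⟩ := (mem_measurableCylinders t).mp ht
  have hSfin : S.Finite := Set.toFinite S
  have hdecomp : cylinder s S = ⋃ f ∈ hSfin.toFinset,
      s.restrict (π := fun _ : Fin d → ℤ => Bool × Bool) ⁻¹' {f} := by
    ext x
    simp only [cylinder, Set.mem_preimage, Set.mem_iUnion, Set.Finite.mem_toFinset,
      Set.mem_singleton_iff, exists_prop, exists_eq_right']
  have hdisj : (hSfin.toFinset : Set (∀ _ : s, Bool × Bool)).PairwiseDisjoint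
      (fun f => s.restrict (π := fun _ : Fin d → ℤ => Bool × Bool) ⁻¹' {f}) := by
    intro f _ g _ hfg
    exact Disjoint.preimage _ (by simpa using hfg)
  have hmeas : ∀ f ∈ hSfin.toFinset,
      MeasurableSet (s.restrict (π := fun _ : Fin d → ℤ => Bool × Bool) ⁻¹' {f}) :=
    fun f _ => (s.measurable_restrict) (measurableSet_singleton f)
  rw [hdecomp, measure_biUnion_finset hdisj hmeas, measure_biUnion_finset hdisj hmeas]
  refine Finset.sum_congr rfl fun f _ => ?_
  have : s.restrict (π := fun _ : Fin d → ℤ => Bool × Bool) ⁻¹' {f}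
      = {x : (Fin d → ℤ) → Bool × Bool | ∀ i ∈ s,
          x i = (fun i => if h : i ∈ s then f ⟨i, h⟩ else (false, false)) i} := by
    ext x
    simp only [Set.mem_preimage, Set.mem_singleton_iff, Set.mem_setOf_eq, funext_iff,
      Finset.restrict]
    constructor
    · intro hx i hi
      simp only [hi, dif_pos]
      exact hx ⟨i, hi⟩
    · intro hx i
      have := hx i.1 i.2
      simpa [i.2] using this
  rw [this]
  exact key s _
end

section
/- Fix d ≥ 1. The family of maps (x ↦ Ψ₂₃(x,y))_{y∈𝒰_fin} is weakly distribution determining: if μ and μ' are Borel probability measures on 𝒰 = U^{ℤ^d} such that for every y ∈ 𝒰_fin the pushforward of μ under x ↦ Ψ₂₃(x,y) equals the pushforward of μ' under x ↦ Ψ₂₃(x,y) (as probability measures on U), then μ = μ'. -/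
/-! The map `χ(a, b) = [a = 0] · (-1)^b` is a multiplicative character of `(U, ⊻)`, so
`χ(Ψ₂₃(x, y)) = ∏_{i ∈ J} χ(ψ₂₃(x i, y i))` whenever `y` vanishes off the finite set `J`. The
hypothesis therefore equates the `μ`- and `μ'`-integrals of these products. The four functions
`u ↦ χ(ψ₂₃(u, w))`, `w ∈ U`, form a basis of `ℝ^U`, so their products over `J` span all functions
of the coordinates in `J`: the finite-dimensional marginals of `μ` and `μ'` agree, and a finite
measure on a product space is determined by these marginals. -/

open Function MeasureTheory Classical

/-- The duality function `Ψ₂₃ : 𝒰 × 𝒰_fin → U` on `U = {0,1} × {0,1}` (encoded as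
`Bool × Bool`), given explicitly by
`Ψ₂₃(x,y) = (max_i min(x₁ i, y₁ i), Σ_i min(x₂ i, y₂ i) mod 2)`,
i.e. the `⊻`-product `⊻_i ψ₂₃(x i, y i)` with `ψ₂₃((a₁,a₂),(b₁,b₂)) = (min a₁ b₁, min a₂ b₂)`
(a well-defined finite product whenever `y` is finitely supported; the second coordinate is
set to `false` in the degenerate case of an infinite index set of ones). -/
noncomputable def Psi23 {Λ : Type*} (x y : Λ → Bool × Bool) : Bool × Bool :=
  (if ∃ i, (x i).1 = true ∧ (y i).1 = true then true else false,
   if h : {i : Λ | (x i).2 = true ∧ (y i).2 = true}.Finite then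
     (h.toFinset.card % 2 == 1) else false)

namespace MeasureTheory.Measure

variable {β κ : Type*} [MeasurableSpace β] [Fintype β] [DecidableEq β] [MeasurableSingletonClass β]
  [Fintype κ]

theorem ext_of_integral_prod_eq_of_fintype {ι : Type*} [Fintype ι] {ν ν' : Measure (ι → β)}
    [IsFiniteMeasure ν] [IsFiniteMeasure ν'] (φ : κ → β → ℝ)
    (hφ : ∀ b, ∃ c : κ → ℝ, ∀ a, ∑ k, c k * φ k a = if a = b then 1 else 0)
    (h : ∀ w : ι → κ, ∫ v, ∏ i, φ (w i) (v i) ∂ν = ∫ v, ∏ i, φ (w i) (v i) ∂ν') :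
    ν = ν' := by
  choose c hc using hφ
  have hindicator (η v : ι → β) : ({η} : Set (ι → β)).indicator 1 v
      = ∑ w : ι → κ, (∏ i, c (η i) (w i)) * ∏ i, φ (w i) (v i) := by
    calc ({η} : Set (ι → β)).indicator 1 v = ∏ i, (if v i = η i then (1 : ℝ) else 0) := by
          simp [Set.indicator, funext_iff, Fintype.prod_boole]
      _ = ∏ i, ∑ k, c (η i) k * φ k (v i) := by simp only [hc]
      _ = _ := by simp only [Fintype.prod_sum, Finset.prod_mul_distrib]
  have hreal (η : ι → β) (μ : Measure (ι → β)) [IsFiniteMeasure μ] :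
      μ.real {η} = ∑ w : ι → κ, (∏ i, c (η i) (w i)) * ∫ v, ∏ i, φ (w i) (v i) ∂μ := by
    rw [← integral_indicator_one (measurableSet_singleton η),
      integral_congr_ae (ae_of_all _ (hindicator η)),
      integral_finsetSum _ fun _ _ => Integrable.of_finite]
    simp only [integral_const_mul]
  refine ext_iff_singleton.mpr fun η => ?_
  rw [← measureReal_eq_measureReal_iff, hreal η ν, hreal η ν']
  simp only [h]

theorem ext_of_integral_prod_eq {Λ : Type*} {μ μ' : Measure (Λ → β)}
    [IsFiniteMeasure μ] [IsFiniteMeasure μ'] (φ : κ → β → ℝ)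
    (hφ : ∀ b, ∃ c : κ → ℝ, ∀ a, ∑ k, c k * φ k a = if a = b then 1 else 0)
    (h : ∀ (J : Finset Λ) (w : J → κ),
      ∫ x, ∏ i : J, φ (w i) (x i) ∂μ = ∫ x, ∏ i : J, φ (w i) (x i) ∂μ') :
    μ = μ' := by
  have hmarginal (ν : Measure (Λ → β)) (J : Finset Λ) (w : J → κ) :
      ∫ v, ∏ i, φ (w i) (v i) ∂ν.map J.restrict = ∫ x, ∏ i : J, φ (w i) (x i) ∂ν :=
    integral_map (Finset.measurable_restrict J).aemeasurable
      (measurable_of_countable _).aestronglyMeasurable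
  refine IsProjectiveLimit.unique (P := fun J => μ.map J.restrict) (fun J => rfl) fun J => ?_
  refine (ext_of_integral_prod_eq_of_fintype φ hφ fun w => ?_).symm
  rw [hmarginal, hmarginal, h]

end MeasureTheory.Measure

theorem DependsOn.measurable {Λ β γ : Type*} [MeasurableSpace β] [Countable β]
    [MeasurableSingletonClass β] [MeasurableSpace γ] [Nonempty γ] {f : (Λ → β) → γ} {s : Set Λ}
    (hf : DependsOn f s) (hs : s.Finite) : Measurable f := by
  obtain ⟨g, rfl⟩ := dependsOn_iff_exists_comp.mp hf
  have : Finite s := hs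
  exact (measurable_of_countable g).comp (Set.measurable_restrict s)

variable {Λ : Type*}

def psi23 (u v : Bool × Bool) : Bool × Bool := (u.1 && v.1, u.2 && v.2)

noncomputable def chi (u : Bool × Bool) : ℝ := (if u.1 then 0 else 1) * (if u.2 then -1 else 1)

lemma exists_sum_mul_chi_psi23_eq_ite (b : Bool × Bool) :
    ∃ c : Bool × Bool → ℝ, ∀ a, ∑ w, c w * chi (psi23 a w) = if a = b then 1 else 0 := by
  -- `c` is row `b` of the inverse of `(chi (psi23 a w))_{a,w}`, the Kronecker product of
  -- `!![1, 1; 1, 0]` and `!![1, 1; 1, -1]`.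
  refine ⟨fun w => (if w.1 then (if b.1 then -1 else 1) else (if b.1 then 1 else 0)) *
    (if w.2 then (if b.2 then -1 else 1) else 1) / 2, fun a => ?_⟩
  obtain ⟨b₁, b₂⟩ := b
  obtain ⟨a₁, a₂⟩ := a
  cases a₁ <;> cases a₂ <;> cases b₁ <;> cases b₂ <;>
    norm_num [Fintype.sum_prod_type, chi, psi23]

lemma dependsOn_Psi23 (y : Λ → Bool × Bool) :
    DependsOn (Psi23 · y) {i | y i ≠ (false, false)} := by
  intro x x' hx
  have hx₁ : ∀ i, (y i).1 = true → x i = x' i := fun i hi => hx i fun h => by simp [h] at hi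
  have hx₂ : ∀ i, (y i).2 = true → x i = x' i := fun i hi => hx i fun h => by simp [h] at hi
  have h₁ : (∃ i, (x i).1 = true ∧ (y i).1 = true) ↔ ∃ i, (x' i).1 = true ∧ (y i).1 = true :=
    exists_congr fun i => and_congr_left fun hyi => by rw [hx₁ i hyi]
  have h₂ : {i | (x i).2 = true ∧ (y i).2 = true} = {i | (x' i).2 = true ∧ (y i).2 = true} :=
    Set.ext fun i => and_congr_left fun hyi => by rw [hx₂ i hyi]
  simp only [Psi23, h₁, h₂]

lemma chi_Psi23 (J : Finset Λ) {y : Λ → Bool × Bool} (hy : ∀ i ∉ J, y i = (false, false))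
    (x : Λ → Bool × Bool) : chi (Psi23 x y) = ∏ i ∈ J, chi (psi23 (x i) (y i)) := by
  have hJ₁ : ∀ i, (y i).1 = true → i ∈ J := fun i hi => by_contra fun h => by simp [hy i h] at hi
  have hJ₂ : ∀ i, (y i).2 = true → i ∈ J := fun i hi => by_contra fun h => by simp [hy i h] at hi
  have hfin : {i | (x i).2 = true ∧ (y i).2 = true}.Finite :=
    J.finite_toSet.subset fun i hi => hJ₂ i hi.2
  have hcard : hfin.toFinset = J.filter fun i => (x i).2 = true ∧ (y i).2 = true := by
    ext i; simpa using fun _ => hJ₂ i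
  have hfirst : (if ∃ i, (x i).1 = true ∧ (y i).1 = true then (0 : ℝ) else 1)
      = ∏ i ∈ J, if (x i).1 = true ∧ (y i).1 = true then (0 : ℝ) else 1 := by
    split_ifs with h
    · rw [eq_comm]
      obtain ⟨i, hi⟩ := h
      exact Finset.prod_eq_zero (hJ₁ i hi.2) (if_pos hi)
    · exact (Finset.prod_eq_one fun i _ => if_neg fun hi => h ⟨i, hi⟩).symm
  have hsecond : (if hfin.toFinset.card % 2 = 1 then (-1 : ℝ) else 1)
      = ∏ i ∈ J, if (x i).2 = true ∧ (y i).2 = true then (-1 : ℝ) else 1 := by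
    rw [Finset.prod_ite, Finset.prod_const, Finset.prod_const_one, mul_one, hcard,
      neg_one_pow_eq_ite]
    rcases Nat.mod_two_eq_zero_or_one (J.filter fun i => (x i).2 = true ∧ (y i).2 = true).card
      with h | h <;> simp [Nat.even_iff, h]
  simp only [chi, psi23, Psi23, dif_pos hfin, Bool.and_eq_true, Finset.prod_mul_distrib,
    ← hfirst, ← hsecond, Bool.if_false_right, Bool.and_true, decide_eq_true_eq, beq_iff_eq]

lemma measurable_Psi23 {y : Λ → Bool × Bool} (hy : {i | y i ≠ (false, false)}.Finite) :
    Measurable (Psi23 · y) :=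
  (dependsOn_Psi23 y).measurable hy

lemma chi_Psi23_dite [DecidableEq Λ] (J : Finset Λ) (w : J → Bool × Bool)
    (x : Λ → Bool × Bool) :
    chi (Psi23 x fun i => if h : i ∈ J then w ⟨i, h⟩ else (false, false))
      = ∏ i : J, chi (psi23 (x i) (w i)) := by
  rw [chi_Psi23 J fun i hi => dif_neg hi, ← Finset.prod_coe_sort]
  simp only [Finset.coe_mem, dif_pos]

theorem psi23_weakly_distribution_determining_general
    (d : ℕ)
    (μ μ' : Measure ((Fin d → ℤ) → Bool × Bool))
    (hμ : IsProbabilityMeasure μ) (hμ' : IsProbabilityMeasure μ')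
    (h : ∀ y : (Fin d → ℤ) → Bool × Bool,
      {i : Fin d → ℤ | y i ≠ (false, false)}.Finite →
      μ.map (fun x => Psi23 x y) = μ'.map (fun x => Psi23 x y)) :
    μ = μ' := by
  refine Measure.ext_of_integral_prod_eq (fun w u => chi (psi23 u w))
    exists_sum_mul_chi_psi23_eq_ite fun J w => ?_
  set y : (Fin d → ℤ) → Bool × Bool := fun i => if h : i ∈ J then w ⟨i, h⟩ else (false, false)
  have hy : {i | y i ≠ (false, false)}.Finite :=
    J.finite_toSet.subset fun i hi => by_contra fun hiJ => hi (dif_neg hiJ)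
  have hmap (ν : Measure ((Fin d → ℤ) → Bool × Bool)) :
      ∫ u, chi u ∂ν.map (Psi23 · y) = ∫ x, ∏ i : J, chi (psi23 (x i) (w i)) ∂ν := by
    rw [integral_map (measurable_Psi23 hy).aemeasurable
      (measurable_of_countable chi).aestronglyMeasurable]
    exact integral_congr_ae (ae_of_all _ (chi_Psi23_dite J w))
  rw [← hmap, ← hmap, h y hy]

/-- **`Ψ₂₃` is weakly distribution determining.** If two Borel probability measures `μ`, `μ'`
on `𝒰 = U^{ℤ^d}` (product topology, `U = Bool × Bool` discrete) are such that for every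
finitely supported `y` the pushforwards of `μ` and `μ'` under `x ↦ Ψ₂₃(x,y)` coincide as
measures on `U`, then `μ = μ'`. -/
theorem psi23_weakly_distribution_determining
    (d : ℕ) (hd : 1 ≤ d)
    (μ μ' : Measure ((Fin d → ℤ) → Bool × Bool))
    (hμ : IsProbabilityMeasure μ) (hμ' : IsProbabilityMeasure μ')
    (h : ∀ y : (Fin d → ℤ) → Bool × Bool,
      {i : Fin d → ℤ | y i ≠ (false, false)}.Finite →
      μ.map (fun x => Psi23 x y) = μ'.map (fun x => Psi23 x y)) :
    μ = μ' :=
  psi23_weakly_distribution_determining_general d μ μ' hμ hμ' h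
end

section
/- Fix d ≥ 1 and let 0 denote the origin of ℤ^d. Define γ : U → ℝ² by γ(a₁,a₂) := (1 − a₁, (−1)^{a₂}). Let μ be the product probability measure on 𝒰 = U^{ℤ^d} whose marginal at coordinate 0 is the uniform distribution on U (mass 1/4 on each of the four elements) and whose marginal at every i ≠ 0 is the point mass at (0,0); let μ' be the product probability measure whose marginal at coordinate 0 assigns mass 1/2 to each of (0,0) and (1,1) and whose marginal at every i ≠ 0 is the point mass at (0,0). Then μ ≠ μ', yet ∫ γ(Ψ₂₃(x,y)) dμ(x) = ∫ γ(Ψ₂₃(x,y)) dμ'(x) in ℝ² for every y ∈ 𝒰_fin. In particular, the family (x ↦ γ(Ψ₂₃(x,y)))_{y∈𝒰_fin} is not distribution determining. -/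
open Function MeasureTheory Classical
open scoped ENNReal

/-- `γ : U → ℝ²`, `γ(a₁,a₂) = (1 - a₁, (-1)^{a₂})`. -/
def gammaU (a : Bool × Bool) : ℝ × ℝ :=
  ((if a.1 then 0 else 1), (if a.2 then -1 else 1))

/-- The configuration in `𝒰 = U^{ℤ^d}` equal to `u` at the origin and to `(0,0)`
everywhere else. -/
def econf (d : ℕ) (u : Bool × Bool) : (Fin d → ℤ) → Bool × Bool :=
  fun i => if i = 0 then u else (false, false)

lemma integrable_dirac' {α E : Type*} [MeasurableSpace α] [MeasurableSingletonClass α]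
    [NormedAddCommGroup E] (f : α → E) (a : α) : Integrable f (Measure.dirac a) :=
  (integrable_const (f a)).congr (ae_eq_dirac f).symm

lemma psi_econf (d : ℕ) (u : Bool × Bool) (y : (Fin d → ℤ) → Bool × Bool) :
    Psi23 (econf d u) y = (u.1 && (y 0).1, u.2 && (y 0).2) := by
  have hS : {i : Fin d → ℤ | (econf d u i).2 = true ∧ (y i).2 = true} =
      (if u.2 = true ∧ (y 0).2 = true then {0} else ∅) := by
    by_cases hb : u.2 = true ∧ (y 0).2 = true
    · rw [if_pos hb]; ext i
      constructor
      · rintro ⟨h1, h2⟩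
        by_cases hi : i = 0
        · exact hi
        · simp [econf, hi] at h1
      · rintro rfl; exact ⟨by simpa [econf] using hb.1, hb.2⟩
    · rw [if_neg hb]; ext i
      simp only [Set.mem_setOf_eq, Set.mem_empty_iff_false, iff_false]
      rintro ⟨h1, h2⟩
      by_cases hi : i = 0
      · subst hi; exact hb ⟨by simpa [econf] using h1, h2⟩
      · simp [econf, hi] at h1
  have hfin : {i : Fin d → ℤ | (econf d u i).2 = true ∧ (y i).2 = true}.Finite := by
    rw [hS]; split <;> simp
  have hcard : hfin.toFinset.card = if u.2 = true ∧ (y 0).2 = true then 1 else 0 := by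
    by_cases hb : u.2 = true ∧ (y 0).2 = true
    · rw [if_pos hb]
      have : hfin.toFinset = {(0 : Fin d → ℤ)} := by
        ext i; simp [Set.Finite.mem_toFinset]; rw [Set.ext_iff] at hS
        have := hS i; simp [if_pos hb] at this; tauto
      rw [this]; rfl
    · rw [if_neg hb]
      have : hfin.toFinset = (∅ : Finset (Fin d → ℤ)) := by
        ext i; simp [Set.Finite.mem_toFinset]; rw [Set.ext_iff] at hS
        have := hS i; simp [if_neg hb] at this; tauto
      rw [this]; rfl
  simp only [Psi23]
  refine Prod.ext ?_ ?_
  · simp only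
    by_cases h : u.1 = true ∧ (y 0).1 = true
    · rw [if_pos ⟨0, by simpa [econf] using h.1, h.2⟩]
      simp [h.1, h.2]
    · rw [if_neg]
      · cases hu : u.1 <;> cases hy : (y 0).1 <;> simp_all
      · rintro ⟨i, h1, h2⟩
        by_cases hi : i = 0
        · subst hi; exact h ⟨by simpa [econf] using h1, h2⟩
        · simp [econf, hi] at h1
  · simp only
    rw [dif_pos hfin, hcard]
    by_cases hb : u.2 = true ∧ (y 0).2 = true
    · simp [hb.1, hb.2]
    · rw [if_neg hb]
      cases hu : u.2 <;> cases hy : (y 0).2 <;> simp_all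


/-- **`γ ∘ Ψ₂₃` is not a good representation.** Let `μ` be the product probability measure on
`𝒰 = U^{ℤ^d}` whose marginal at the origin is uniform on `U` and whose marginal at every
other site is the point mass at `(0,0)` (i.e. the uniform mixture of the four point masses
at the configurations `econf d u`), and let `μ'` be the analogous measure whose marginal at
the origin gives mass `1/2` to each of `(0,0)` and `(1,1)`. Then `μ ≠ μ'`, yet
`∫ γ(Ψ₂₃(x,y)) dμ(x) = ∫ γ(Ψ₂₃(x,y)) dμ'(x)` for every finitely supported `y`; in
particular the family `(x ↦ γ(Ψ₂₃(x,y)))_y` is not distribution determining. -/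
theorem gamma_psi23_not_distribution_determining
    (d : ℕ) (hd : 1 ≤ d) :
    ((4 : ℝ≥0∞)⁻¹ • (Measure.dirac (econf d (false, false)) +
        Measure.dirac (econf d (false, true)) + Measure.dirac (econf d (true, false)) +
        Measure.dirac (econf d (true, true))) ≠
      (2 : ℝ≥0∞)⁻¹ • (Measure.dirac (econf d (false, false)) +
        Measure.dirac (econf d (true, true)))) ∧
    (∀ y : (Fin d → ℤ) → Bool × Bool,
      {i : Fin d → ℤ | y i ≠ (false, false)}.Finite →
      ∫ x, gammaU (Psi23 x y)
          ∂((4 : ℝ≥0∞)⁻¹ • (Measure.dirac (econf d (false, false)) +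
            Measure.dirac (econf d (false, true)) + Measure.dirac (econf d (true, false)) +
            Measure.dirac (econf d (true, true)))) =
        ∫ x, gammaU (Psi23 x y)
          ∂((2 : ℝ≥0∞)⁻¹ • (Measure.dirac (econf d (false, false)) +
            Measure.dirac (econf d (true, true))))) ∧
    ¬ (∀ ν ν' : Measure ((Fin d → ℤ) → Bool × Bool),
        IsProbabilityMeasure ν → IsProbabilityMeasure ν' →
        (∀ y : (Fin d → ℤ) → Bool × Bool,
          {i : Fin d → ℤ | y i ≠ (false, false)}.Finite →
          ∫ x, gammaU (Psi23 x y) ∂ν = ∫ x, gammaU (Psi23 x y) ∂ν') →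
        ν = ν') := by
  set μ := (4 : ℝ≥0∞)⁻¹ • (Measure.dirac (econf d (false, false)) +
      Measure.dirac (econf d (false, true)) + Measure.dirac (econf d (true, false)) +
      Measure.dirac (econf d (true, true))) with hμ
  set μ' := (2 : ℝ≥0∞)⁻¹ • (Measure.dirac (econf d (false, false)) +
      Measure.dirac (econf d (true, true))) with hμ'
  have hecong : ∀ u v : Bool × Bool, econf d u = econf d v → u = v := by
    intro u v h
    have := congrFun h 0
    simpa [econf] using this
  -- μ ≠ μ'
  have hne : μ ≠ μ' := by
    intro h
    have hms : MeasurableSet ({econf d (false, true)} : Set ((Fin d → ℤ) → Bool × Bool)) :=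
      measurableSet_singleton _
    have := congrArg (fun m : Measure ((Fin d → ℤ) → Bool × Bool) =>
      m {econf d (false, true)}) h
    simp only [hμ, hμ', Measure.smul_apply, Measure.add_apply, smul_eq_mul] at this
    have e1 : ∀ u : Bool × Bool, u ≠ (false, true) →
        Measure.dirac (econf d u) ({econf d (false, true)} :
          Set ((Fin d → ℤ) → Bool × Bool)) = 0 := by
      intro u hu
      rw [Measure.dirac_apply]
      simp only [Set.indicator_apply, Set.mem_singleton_iff]
      rw [if_neg]
      exact fun h => hu (hecong _ _ h)
    have e2 : Measure.dirac (econf d (false, true)) ({econf d (false, true)} :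
        Set ((Fin d → ℤ) → Bool × Bool)) = 1 := by
      rw [Measure.dirac_apply]
      simp [Set.indicator_apply]
    rw [e1 (false, false) (by simp), e1 (true, false) (by simp), e1 (true, true) (by simp),
      e2] at this
    norm_num at this
  have hint : ∀ y : (Fin d → ℤ) → Bool × Bool,
      ∫ x, gammaU (Psi23 x y) ∂μ = ∫ x, gammaU (Psi23 x y) ∂μ' := by
    intro y
    set f : ((Fin d → ℤ) → Bool × Bool) → ℝ × ℝ := fun x => gammaU (Psi23 x y) with hf
    have hi : ∀ a, Integrable f (Measure.dirac a) := fun a => integrable_dirac' f a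
    rw [hμ, hμ', integral_smul_measure, integral_smul_measure,
      integral_add_measure (((hi _).add_measure (hi _)).add_measure (hi _)) (hi _),
      integral_add_measure ((hi _).add_measure (hi _)) (hi _),
      integral_add_measure (hi _) (hi _), integral_add_measure (hi _) (hi _)]
    simp only [integral_dirac]
    have h4 : ((4 : ℝ≥0∞)⁻¹).toReal = (4 : ℝ)⁻¹ := by
      simp [ENNReal.toReal_inv]
    have h2 : ((2 : ℝ≥0∞)⁻¹).toReal = (2 : ℝ)⁻¹ := by
      simp [ENNReal.toReal_inv]
    rw [h4, h2, hf]
    simp only [psi_econf]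
    cases h1 : (y 0).1 <;> cases h2 : (y 0).2 <;>
      simp [gammaU, Prod.ext_iff, Prod.smul_mk] <;> norm_num
  refine ⟨hne, fun y _ => hint y, fun H => ?_⟩
  have hp : IsProbabilityMeasure μ := by
    constructor
    rw [hμ]
    simp only [Measure.smul_apply, Measure.add_apply, Measure.dirac_apply_of_mem
      (Set.mem_univ _), smul_eq_mul]
    rw [show ((1:ℝ≥0∞)+1+1+1 : ℝ≥0∞) = 4 by norm_num, ENNReal.inv_mul_cancel] <;> norm_num
  have hp' : IsProbabilityMeasure μ' := by
    constructor
    rw [hμ']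
    simp only [Measure.smul_apply, Measure.add_apply, Measure.dirac_apply_of_mem
      (Set.mem_univ _), smul_eq_mul]
    rw [show ((1:ℝ≥0∞)+1 : ℝ≥0∞) = 2 by norm_num, ENNReal.inv_mul_cancel] <;> norm_num
  exact hne (H μ μ' hp hp' (fun y _ => hint y))
end

section
/- Let λ, δ ∈ ℝ with 0 ≤ λ and λ ≤ 2δ. For a finite subset B of ℤ, define f(B) := max B − min B + 4 if B is nonempty and f(∅) := 0. Then for every nonempty finite subset A of ℤ: Σ_{i∈A} [ λ·( f(A Δ {i−1}) + f(A Δ {i+1}) − 2·f(A) ) + δ·( f(A \ {i}) − f(A) ) ] ≤ 0, where Δ denotes the symmetric difference of sets. -/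
/-- `f(B) = max B - min B + 4` for a nonempty finite set `B ⊆ ℤ`, and `f(∅) = 0`. -/
noncomputable def spanF (B : Finset ℤ) : ℝ :=
  if h : B.Nonempty then ((B.max' h : ℤ) : ℝ) - ((B.min' h : ℤ) : ℝ) + 4 else 0

lemma spanF_eq (B : Finset ℤ) (hB : B.Nonempty) :
    spanF B = ((B.max' hB : ℤ) : ℝ) - ((B.min' hB : ℤ) : ℝ) + 4 := by
  unfold spanF; rw [dif_pos hB]

/-- If all elements of `B` lie in `[a, b]`, then `spanF B ≤ b - a + 4`
(provided the bound is nonnegative, to cover the empty case). -/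
lemma spanF_le' (B : Finset ℤ) (a b : ℤ) (hB : ∀ x ∈ B, a ≤ x ∧ x ≤ b)
    (h0 : (0:ℝ) ≤ (b:ℝ) - (a:ℝ) + 4) : spanF B ≤ (b:ℝ) - (a:ℝ) + 4 := by
  unfold spanF
  split
  · next h =>
    have h1 : B.max' h ≤ b := Finset.max'_le B h b (fun y hy => (hB y hy).2)
    have h2 : a ≤ B.min' h := Finset.le_min' B h a (fun y hy => (hB y hy).1)
    have h1' : ((B.max' h : ℤ) : ℝ) ≤ (b : ℝ) := by exact_mod_cast h1
    have h2' : (a : ℝ) ≤ ((B.min' h : ℤ) : ℝ) := by exact_mod_cast h2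
    linarith
  · exact h0

lemma symmDiff_singleton_of_mem {A : Finset ℤ} {j : ℤ} (h : j ∈ A) :
    symmDiff A {j} = A.erase j := by
  ext x
  simp only [Finset.mem_symmDiff, Finset.mem_singleton, Finset.mem_erase]
  constructor
  · rintro (⟨hx, hne⟩ | ⟨rfl, hx⟩)
    · exact ⟨hne, hx⟩
    · exact absurd h hx
  · rintro ⟨hne, hx⟩; exact Or.inl ⟨hx, hne⟩

lemma symmDiff_singleton_of_not_mem {A : Finset ℤ} {j : ℤ} (h : j ∉ A) :
    symmDiff A {j} = insert j A := by
  ext x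
  simp only [Finset.mem_symmDiff, Finset.mem_singleton, Finset.mem_insert]
  constructor
  · rintro (⟨hx, hne⟩ | ⟨rfl, hx⟩)
    · exact Or.inr hx
    · exact Or.inl rfl
  · rintro (rfl | hx)
    · exact Or.inr ⟨rfl, h⟩
    · exact Or.inl ⟨hx, fun he => h (he ▸ hx)⟩

/-- **Supermartingale bound for the one-dimensional cancellative contact process.** For
`0 ≤ λ ≤ 2δ` and every nonempty finite `A ⊆ ℤ`, the generator of the cancellative contact
process applied to `f` at the configuration `A` is nonpositive:
`Σ_{i∈A} [ λ·(f(A Δ {i-1}) + f(A Δ {i+1}) - 2·f(A)) + δ·(f(A \ {i}) - f(A)) ] ≤ 0`. -/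
theorem cCP_generator_nonpositive
    (lam del : ℝ) (hlam : 0 ≤ lam) (hdel : lam ≤ 2 * del)
    (A : Finset ℤ) (hA : A.Nonempty) :
    ∑ i ∈ A,
      (lam * (spanF (symmDiff A {i - 1}) + spanF (symmDiff A {i + 1}) - 2 * spanF A)
        + del * (spanF (A.erase i) - spanF A)) ≤ 0 := by
  have hdel0 : 0 ≤ del := by linarith
  set M : ℤ := A.max' hA with hMdef
  set m : ℤ := A.min' hA with hmdef
  have hMA : M ∈ A := A.max'_mem hA
  have hmA : m ∈ A := A.min'_mem hA
  have hub : ∀ x ∈ A, x ≤ M := fun x hx => A.le_max' x hx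
  have hlb : ∀ x ∈ A, m ≤ x := fun x hx => A.min'_le x hx
  have hmM : m ≤ M := hlb M hMA
  have hspanA : spanF A = (M : ℝ) - (m : ℝ) + 4 := spanF_eq A hA
  have hmMR : (m : ℝ) ≤ (M : ℝ) := by exact_mod_cast hmM
  -- bound functions
  set bL : ℤ → ℝ := fun i =>
    (if i = m then (1:ℝ) else 0) +
      (if m + 1 ∈ A then (if i = m + 1 then (-1:ℝ) else 0) else 0) with hbL
  set bR : ℤ → ℝ := fun i =>
    (if i = M then (1:ℝ) else 0) +
      (if M - 1 ∈ A then (if i = M - 1 then (-1:ℝ) else 0) else 0) with hbR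
  set bD : ℤ → ℝ := fun i =>
    (if M - 1 ∈ A then 0 else if i = M then (-2:ℝ) else 0) +
      (if m + 1 ∈ A then 0 else if i = m then (-2:ℝ) else 0) with hbD
  -- pointwise bounds
  have hRkey : ∀ i ∈ A, spanF (symmDiff A {i + 1}) ≤ spanF A + bR i := by
    intro i hi
    by_cases h1 : i + 1 ∈ A
    · rw [symmDiff_singleton_of_mem h1]
      by_cases h2 : i = M - 1
      · -- removing M, drop of at least 1
        have hmle : m ≤ M - 1 := by have := hlb i hi; omega
        have hb : spanF (A.erase (i + 1)) ≤ ((M - 1 : ℤ) : ℝ) - (m : ℝ) + 4 := by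
          apply spanF_le'
          · intro x hx
            have hxA : x ∈ A := Finset.mem_of_mem_erase hx
            have hxne : x ≠ i + 1 := Finset.ne_of_mem_erase hx
            have := hub x hxA
            exact ⟨hlb x hxA, by omega⟩
          · push_cast; linarith [hmMR]
        have hbRi : bR i = -1 := by
          have hM1 : M - 1 ∈ A := h2 ▸ hi
          have hiM : i ≠ M := by omega
          simp [hbR, hM1, h2, hiM]
        rw [hbRi, hspanA]
        push_cast at hb ⊢
        linarith
      · have hb : spanF (A.erase (i + 1)) ≤ (M : ℝ) - (m : ℝ) + 4 := by
          apply spanF_le'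
          · intro x hx
            have hxA : x ∈ A := Finset.mem_of_mem_erase hx
            exact ⟨hlb x hxA, hub x hxA⟩
          · push_cast; linarith [hmMR]
        have hbRi : 0 ≤ bR i := by
          simp only [hbR]
          split_ifs <;> simp_all <;> linarith
        rw [hspanA]
        linarith
    · rw [symmDiff_singleton_of_not_mem h1]
      by_cases h2 : i = M
      · have hb : spanF (insert (i + 1) A) ≤ ((M + 1 : ℤ) : ℝ) - (m : ℝ) + 4 := by
          apply spanF_le'
          · intro x hx
            rcases Finset.mem_insert.mp hx with rfl | hxA
            · constructor <;> omega
            · have := hub x hxA; have := hlb x hxA; constructor <;> omega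
          · push_cast; linarith [hmMR]
        have hbRi : bR i = 1 := by
          subst h2
          have hne : M ≠ M - 1 := by omega
          simp [hbR, hne]
        rw [hbRi, hspanA]
        push_cast at hb ⊢
        linarith
      · have hile : i + 1 ≤ M := by have := hub i hi; omega
        have hb : spanF (insert (i + 1) A) ≤ (M : ℝ) - (m : ℝ) + 4 := by
          apply spanF_le'
          · intro x hx
            rcases Finset.mem_insert.mp hx with rfl | hxA
            · have := hlb i hi; constructor <;> omega
            · exact ⟨hlb x hxA, hub x hxA⟩
          · push_cast; linarith [hmMR]
        have hiM1 : i ≠ M - 1 := by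
          intro h; apply h1; rw [h]; simpa using hMA
        have hbRi : 0 ≤ bR i := by
          simp [hbR, h2, hiM1]
        rw [hspanA]
        linarith
  have hLkey : ∀ i ∈ A, spanF (symmDiff A {i - 1}) ≤ spanF A + bL i := by
    intro i hi
    by_cases h1 : i - 1 ∈ A
    · rw [symmDiff_singleton_of_mem h1]
      by_cases h2 : i = m + 1
      · have hMge : m + 1 ≤ M := by have := hub i hi; omega
        have hb : spanF (A.erase (i - 1)) ≤ ((M : ℤ) : ℝ) - ((m + 1 : ℤ) : ℝ) + 4 := by
          apply spanF_le'
          · intro x hx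
            have hxA : x ∈ A := Finset.mem_of_mem_erase hx
            have hxne : x ≠ i - 1 := Finset.ne_of_mem_erase hx
            have := hlb x hxA
            exact ⟨by omega, hub x hxA⟩
          · push_cast; linarith [hmMR]
        have hbLi : bL i = -1 := by
          have hm1 : m + 1 ∈ A := h2 ▸ hi
          have him : i ≠ m := by omega
          simp [hbL, hm1, h2, him]
        rw [hbLi, hspanA]
        push_cast at hb ⊢
        linarith
      · have hb : spanF (A.erase (i - 1)) ≤ (M : ℝ) - (m : ℝ) + 4 := by
          apply spanF_le'
          · intro x hx
            have hxA : x ∈ A := Finset.mem_of_mem_erase hx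
            exact ⟨hlb x hxA, hub x hxA⟩
          · push_cast; linarith [hmMR]
        have hbLi : 0 ≤ bL i := by
          simp only [hbL]
          split_ifs <;> simp_all <;> linarith
        rw [hspanA]
        linarith
    · rw [symmDiff_singleton_of_not_mem h1]
      by_cases h2 : i = m
      · have hb : spanF (insert (i - 1) A) ≤ ((M : ℤ) : ℝ) - ((m - 1 : ℤ) : ℝ) + 4 := by
          apply spanF_le'
          · intro x hx
            rcases Finset.mem_insert.mp hx with rfl | hxA
            · constructor <;> omega
            · have := hub x hxA; have := hlb x hxA; constructor <;> omega
          · push_cast; linarith [hmMR]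
        have hbLi : bL i = 1 := by
          subst h2
          have hne : m ≠ m + 1 := by omega
          simp [hbL, hne]
        rw [hbLi, hspanA]
        push_cast at hb ⊢
        linarith
      · have hile : m ≤ i - 1 := by have := hlb i hi; omega
        have hb : spanF (insert (i - 1) A) ≤ (M : ℝ) - (m : ℝ) + 4 := by
          apply spanF_le'
          · intro x hx
            rcases Finset.mem_insert.mp hx with rfl | hxA
            · have := hub i hi; constructor <;> omega
            · exact ⟨hlb x hxA, hub x hxA⟩
          · push_cast; linarith [hmMR]
        have him1 : i ≠ m + 1 := by
          intro h; apply h1; rw [h]; simpa using hmA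
        have hbLi : 0 ≤ bL i := by
          simp [hbL, h2, him1]
        rw [hspanA]
        linarith
  have hDkey : ∀ i ∈ A, spanF (A.erase i) ≤ spanF A + bD i := by
    intro i hi
    by_cases h2 : i = M ∧ M - 1 ∉ A
    · obtain ⟨rfl, hM1⟩ := h2
      by_cases h3 : M = m
      · -- singleton: erase M is empty
        have hempty : A.erase M = ∅ := by
          ext x
          simp only [Finset.mem_erase, Finset.notMem_empty, iff_false, not_and]
          intro hne hx
          have := hub x hx; have := hlb x hx; omega
        have hm1 : m + 1 ∉ A := by
          intro h; have := hub (m+1) h; omega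
        have : spanF (A.erase M) = 0 := by rw [hempty]; unfold spanF; simp
        rw [this, hspanA]
        have hbDi : bD M = -4 := by
          simp only [hbD]
          rw [if_neg hM1, if_neg hm1]
          simp [h3]
          norm_num
        rw [hbDi]
        push_cast
        linarith [hmM]
      · have hmlt : m ≤ M - 2 ∨ True := Or.inr trivial
        have hb : spanF (A.erase M) ≤ ((M - 2 : ℤ) : ℝ) - (m : ℝ) + 4 := by
          apply spanF_le'
          · intro x hx
            have hxA : x ∈ A := Finset.mem_of_mem_erase hx
            have hxne : x ≠ M := Finset.ne_of_mem_erase hx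
            have hxle := hub x hxA
            have hxM1 : x ≠ M - 1 := by intro h; exact hM1 (h ▸ hxA)
            exact ⟨hlb x hxA, by omega⟩
          · push_cast; linarith [hmMR]
        have hbDi : (-2:ℝ) ≤ bD M := by
          have hsec : (if m + 1 ∈ A then (0:ℝ) else if M = m then -2 else 0) = 0 := by
            split_ifs with c1 c2 <;> first | rfl | exact absurd c2 h3
          simp only [hbD, if_neg hM1, hsec, add_zero]
          split_ifs <;> norm_num
        rw [hspanA]
        push_cast at hb ⊢
        linarith [hbDi]
    · by_cases h4 : i = m ∧ m + 1 ∉ A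
      · obtain ⟨rfl, hm1⟩ := h4
        -- here m ≠ M (else we'd be in previous case)
        have hmM' : m ≠ M := by
          intro h
          apply h2
          constructor
          · exact h.symm ▸ rfl
          · intro hM1; have := hlb (M-1) hM1; omega
        have hb : spanF (A.erase m) ≤ ((M : ℤ) : ℝ) - ((m + 2 : ℤ) : ℝ) + 4 := by
          apply spanF_le'
          · intro x hx
            have hxA : x ∈ A := Finset.mem_of_mem_erase hx
            have hxne : x ≠ m := Finset.ne_of_mem_erase hx
            have hxge := hlb x hxA
            have hxm1 : x ≠ m + 1 := by intro h; exact hm1 (h ▸ hxA)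
            exact ⟨by omega, hub x hxA⟩
          · push_cast; linarith [hmMR]
        have hbDi : (-2:ℝ) ≤ bD m := by
          have hsec : (if M - 1 ∈ A then (0:ℝ) else if m = M then -2 else 0) = 0 := by
            split_ifs with c1 c2 <;> first | rfl | exact absurd c2 hmM'
          simp only [hbD, if_neg hm1, hsec]
          split_ifs <;> norm_num
        rw [hspanA]
        push_cast at hb ⊢
        linarith [hbDi]
      · -- generic: erase is bounded by spanF A, bD i = 0
        have hb : spanF (A.erase i) ≤ (M : ℝ) - (m : ℝ) + 4 := by
          apply spanF_le'
          · intro x hx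
            have hxA : x ∈ A := Finset.mem_of_mem_erase hx
            exact ⟨hlb x hxA, hub x hxA⟩
          · push_cast; linarith [hmMR]
        push_neg at h2 h4
        have e1 : (if M - 1 ∈ A then (0:ℝ) else if i = M then -2 else 0) = 0 := by
          split_ifs with c1 c2
          · rfl
          · exact absurd (h2 c2) c1
          · rfl
        have e2 : (if m + 1 ∈ A then (0:ℝ) else if i = m then -2 else 0) = 0 := by
          split_ifs with c1 c2
          · rfl
          · exact absurd (h4 c2) c1
          · rfl
        have hbDi : bD i = 0 := by
          simp only [hbD, e1, e2, add_zero]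
        rw [hspanA, hbDi]
        linarith
  -- combine pointwise
  have key : ∀ i ∈ A,
      lam * (spanF (symmDiff A {i - 1}) + spanF (symmDiff A {i + 1}) - 2 * spanF A)
        + del * (spanF (A.erase i) - spanF A)
      ≤ lam * (bL i + bR i) + del * bD i := by
    intro i hi
    have h1 := hLkey i hi
    have h2 := hRkey i hi
    have h3 := hDkey i hi
    have e1 : spanF (symmDiff A {i - 1}) + spanF (symmDiff A {i + 1}) - 2 * spanF A
        ≤ bL i + bR i := by linarith
    have e2 : spanF (A.erase i) - spanF A ≤ bD i := by linarith
    have := mul_le_mul_of_nonneg_left e1 hlam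
    have := mul_le_mul_of_nonneg_left e2 hdel0
    linarith
  calc ∑ i ∈ A,
      (lam * (spanF (symmDiff A {i - 1}) + spanF (symmDiff A {i + 1}) - 2 * spanF A)
        + del * (spanF (A.erase i) - spanF A))
      ≤ ∑ i ∈ A, (lam * (bL i + bR i) + del * bD i) := Finset.sum_le_sum key
    _ ≤ 0 := by
        have e1 : ∑ i ∈ A, bL i = 1 + (if m + 1 ∈ A then (-1:ℝ) else 0) := by
          simp only [hbL, Finset.sum_add_distrib]
          congr 1
          · rw [Finset.sum_ite_eq' A m (fun _ => (1:ℝ))]; simp [hmA]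
          · by_cases h : m + 1 ∈ A <;>
              simp [h, Finset.sum_ite_eq' A (m+1) (fun _ => (-1:ℝ))]
        have e2 : ∑ i ∈ A, bR i = 1 + (if M - 1 ∈ A then (-1:ℝ) else 0) := by
          simp only [hbR, Finset.sum_add_distrib]
          congr 1
          · rw [Finset.sum_ite_eq' A M (fun _ => (1:ℝ))]; simp [hMA]
          · by_cases h : M - 1 ∈ A <;>
              simp [h, Finset.sum_ite_eq' A (M-1) (fun _ => (-1:ℝ))]
        have e3 : ∑ i ∈ A, bD i =
            (if M - 1 ∈ A then 0 else (-2:ℝ)) + (if m + 1 ∈ A then 0 else (-2:ℝ)) := by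
          simp only [hbD, Finset.sum_add_distrib]
          congr 1
          · by_cases h : M - 1 ∈ A <;>
              simp [h, Finset.sum_ite_eq' A M (fun _ => (-2:ℝ)), hMA]
          · by_cases h : m + 1 ∈ A <;>
              simp [h, Finset.sum_ite_eq' A m (fun _ => (-2:ℝ)), hmA]
        have etot : ∑ i ∈ A, (lam * (bL i + bR i) + del * bD i)
            = lam * (∑ i ∈ A, bL i) + lam * (∑ i ∈ A, bR i) + del * (∑ i ∈ A, bD i) := by
          simp only [Finset.sum_add_distrib, mul_add, ← Finset.mul_sum]
          try ring
        rw [etot, e1, e2, e3]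
        by_cases h1 : M - 1 ∈ A <;> by_cases h2 : m + 1 ∈ A <;>
          simp [h1, h2] <;> nlinarith
end
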